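/- arXiv:1704.03806 — 3 statements merged into one kernel-verified Lean document; each statement's English description precedes it below -/
import Mathlib

section
/- Let (G, h, m) be a stable connected weighted n-marked graph and let P be a sharp, integral, saturated commutative monoid. For a monoid homomorphism f : ℕ^{E(G)} → P (ℕ^{E(G)} the free commutative monoid on the edge set, with generator [e] for each edge e), set S_f = {e ∈ E(G) : f([e]) = 0}, let Γ_f be the tropical curve over P whose underlying weighted n-marked graph is (G, h, m)/S_f, with each non-contracted edge e ∉ S_f given length f([e]), and let φ_{S_f} : (G, h, m) → (G, h, m)/S_f be the canonical contraction morphism. Then f ↦ (Γ_f, φ_{S_f}) is a bijection from the set of monoid homomorphisms ℕ^{E(G)} → P onto the set of isomorphism classes of pairs (Γ, φ) consisting of a tropical curve Γ over P and a morphism φ : (G, h, m) → 𝔾(Γ) of weighted n-marked graphs, where (Γ, φ) ≅ (Γ′, φ′) means there is an isomorphism u : Γ → Γ′ of tropical curves over P with 𝔾(u) ∘ φ = φ′. Moreover each such pair is rigid: the only isomorphism u : Γ → Γ with 𝔾(u) ∘ φ = φ is the identity. -/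
/-! ## Graphs, weighted marked graphs, morphisms, tropical curves

A graph consists of a finite set `X = V ⊔ F` of vertices and flags, an idempotent
root map `r` with image the vertices (= fixed points of `r`), and an involution `ι`
fixing every vertex.  Edges are the two-element orbits of `ι` on flags, legs are the
flags fixed by `ι`.  A weighted `μ`-marked graph carries a vertex weighting `w`
(only its values on vertices are ever used) and a marking, i.e. a bijection
`mark : μ → legs`. -/
structure WGraph (μ : Type) : Type 1 where
  X : Type
  fin : Fintype X
  deq : DecidableEq X
  r : X → X
  ι : X → X
  r_idem : ∀ x, r (r x) = r x
  ι_invol : ∀ x, ι (ι x) = x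
  ι_fix : ∀ x, r x = x → ι x = x
  w : X → ℕ
  mark : μ → X
  mark_flag : ∀ j, r (mark j) ≠ mark j
  mark_leg : ∀ j, ι (mark j) = mark j
  mark_inj : Function.Injective mark
  mark_surj : ∀ x, r x ≠ x → ι x = x → ∃ j, mark j = x

attribute [instance] WGraph.fin WGraph.deq

namespace WGraph

variable {μ : Type} (G : WGraph μ)

/-- `x` is a vertex iff it is a fixed point of the root map. -/
def IsVertex (x : G.X) : Prop := G.r x = x

/-- `x` is a flag iff it is not a vertex. -/
def IsFlag (x : G.X) : Prop := G.r x ≠ x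

/-- A leg is a flag fixed by the involution. -/
def IsLeg (x : G.X) : Prop := G.r x ≠ x ∧ G.ι x = x

def vertexFinset : Finset G.X := Finset.univ.filter (fun x => G.r x = x)

/-- The number of vertices. -/
def numV : ℕ := G.vertexFinset.card

/-- The edges supported in a subset `A` of `X`: two-element orbits `{x, ι x}` of
flags of `A` moved by the involution. -/
def subEdgeSet (A : Finset G.X) : Finset (Finset G.X) :=
  (A.filter (fun x => G.ι x ≠ x)).image (fun x => {x, G.ι x})

/-- The set of edges of `G`, each edge being the pair `{x, ι x}` of its flags. -/
def edgeSet : Finset (Finset G.X) := G.subEdgeSet Finset.univ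

/-- The number of edges. -/
def numE : ℕ := G.edgeSet.card

/-- The valence of `v`: the number of flags emanating from `v`. -/
def val (v : G.X) : ℕ := (Finset.univ.filter (fun x => G.r x ≠ x ∧ G.r x = v)).card

/-- First Betti number `#E - #V + 1` of the subgraph supported on `A`. -/
def subB1 (A : Finset G.X) : ℤ :=
  ((G.subEdgeSet A).card : ℤ) - ((A.filter (fun x => G.r x = x)).card : ℤ) + 1

/-- Genus `b₁ + Σ_v w v` of the subgraph supported on `A`. -/
def subGenus (A : Finset G.X) : ℤ :=
  G.subB1 A + ∑ v ∈ A.filter (fun x => G.r x = x), (G.w v : ℤ)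

/-- First Betti number `#E - #V + 1` of `G`. -/
def b1 : ℤ := G.subB1 Finset.univ

/-- The genus `b₁(G) + Σ_v w v` of a (connected) weighted graph. -/
def genus : ℤ := G.subGenus Finset.univ

/-- Two vertices are adjacent via a flag `f ∈ A` when `r f = v` and `r (ι f) = u`. -/
def subAdj (A : Finset G.X) (v u : G.X) : Prop :=
  ∃ f ∈ A, G.r f ≠ f ∧ G.r f = v ∧ G.r (G.ι f) = u

/-- The subgraph supported on `A` is connected: it has a vertex, and any two of its
vertices are joined by a chain of flags of `A`. -/
def SubConnected (A : Finset G.X) : Prop :=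
  (∃ v ∈ A, G.r v = v) ∧
    ∀ v ∈ A, ∀ u ∈ A, G.r v = v → G.r u = u →
      Relation.ReflTransGen (G.subAdj A) v u

/-- Connectivity of the graph `G`. -/
def Connected : Prop := G.SubConnected Finset.univ

/-- Stability: every vertex satisfies `2 w v - 2 + val v > 0`. -/
def Stable : Prop := ∀ v, G.IsVertex v → 0 < 2 * (G.w v : ℤ) - 2 + (G.val v : ℤ)

/-- The fiber of a map over a point of the target. -/
def fiber {G' : WGraph μ} (f : G.X → G'.X) (y : G'.X) : Finset G.X :=
  Finset.univ.filter (fun x => f x = y)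

end WGraph

/-- A morphism of weighted `μ`-marked graphs: a map of underlying sets commuting
with the root maps and involutions, preserving the markings of the legs, such that
every flag of the target has exactly one preimage, and such that the preimage graph
of each vertex `y` of the target is connected of genus `w' y`. -/
structure GMor {μ : Type} (G G' : WGraph μ) : Type where
  f : G.X → G'.X
  comm_r : ∀ x, f (G.r x) = G'.r (f x)
  comm_i : ∀ x, f (G.ι x) = G'.ι (f x)
  mark_comm : ∀ j, f (G.mark j) = G'.mark j
  flag_fiber : ∀ y, G'.r y ≠ y → ∃! x, f x = y
  fiber_conn : ∀ y, G'.r y = y → G.SubConnected (G.fiber f y)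
  fiber_genus : ∀ y, G'.r y = y → G.subGenus (G.fiber f y) = (G'.w y : ℤ)

/-- The set of edges contracted by a morphism: those edges `{x, ι x}` whose flags
are sent to a vertex of the target. -/
def GMor.contractedSet {μ : Type} {G G' : WGraph μ} (φ : GMor G G') :
    Finset (Finset G.X) :=
  (Finset.univ.filter (fun x : G.X => G.ι x ≠ x ∧ G'.r (φ.f x) = φ.f x)).image
    (fun x => {x, G.ι x})

/-- An isomorphism of weighted `μ`-marked graphs: a bijection of the underlying sets
commuting with the root maps and involutions, preserving the vertex weights and the
markings of the legs. -/
structure GIso {μ : Type} (G G' : WGraph μ) : Type where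
  e : G.X ≃ G'.X
  comm_r : ∀ x, e (G.r x) = G'.r (e x)
  comm_i : ∀ x, e (G.ι x) = G'.ι (e x)
  weight : ∀ x, G.r x = x → G'.w (e x) = G.w x
  mark_comm : ∀ j, e (G.mark j) = G'.mark j

/-- A commutative monoid is sharp if `0` is its only unit. -/
def Sharp (P : Type) [AddCommMonoid P] : Prop := ∀ x y : P, x + y = 0 → x = 0

/-- A commutative monoid is integral (cancellative) iff the canonical map to its
Grothendieck group is injective. -/
def IntegralMonoid (P : Type) [AddCommMonoid P] : Prop :=
  ∀ a b c : P, a + b = a + c → b = c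

/-- An integral commutative monoid is saturated if every element `x = a - b` of its
Grothendieck group with `k • x ∈ P` for some `k ≥ 1` lies in `P`. -/
def SaturatedMonoid (P : Type) [AddCommMonoid P] : Prop :=
  ∀ (k : ℕ) (a b : P), 0 < k → (∃ p : P, k • a = k • b + p) → ∃ q : P, a = b + q

/-- A tropical curve over `P` with legs marked by `μ`: a connected weighted
`μ`-marked graph together with an edge-length function with values in `P`, nonzero
on every edge.  (The length function is recorded on flags, invariant under the
involution; only its values on the flags of edges are meaningful.) -/
structure Trop (P : Type) [AddCommMonoid P] (μ : Type) : Type 1 where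
  G : WGraph μ
  conn : G.Connected
  len : G.X → P
  len_symm : ∀ x, len (G.ι x) = len x
  len_ne : ∀ x, G.ι x ≠ x → len x ≠ 0

/-- An isomorphism of tropical curves over `P`: an isomorphism of the underlying
weighted marked graphs preserving the edge lengths. -/
structure TIso {P : Type} [AddCommMonoid P] {μ : Type} (T T' : Trop P μ) : Type where
  g : GIso T.G T'.G
  len_eq : ∀ x, T.G.ι x ≠ x → T'.len (g.e x) = T.len x

/-- The edge set of `G` as a type. -/
def WGraph.Edge {μ : Type} (G : WGraph μ) : Type := {e : Finset G.X // e ∈ G.edgeSet}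

instance {μ : Type} (G : WGraph μ) : DecidableEq G.Edge :=
  inferInstanceAs (DecidableEq {e : Finset G.X // e ∈ G.edgeSet})

/-- A pair `(Γ, φ)` consisting of a tropical curve `Γ` over `P` with `n` marked
legs and a morphism `φ : (G,h,m) → 𝔾(Γ)` of weighted `n`-marked graphs. -/
structure CPair {n : ℕ} (G : WGraph (Fin n)) (P : Type) [AddCommMonoid P] :
    Type 1 where
  T : Trop P (Fin n)
  φ : GMor G T.G

/-- `(Γ, φ) ≅ (Γ', φ')`: there is an isomorphism `u : Γ → Γ'` of tropical curves
over `P` with `𝔾(u) ∘ φ = φ'`.  Isomorphism classes of pairs are the elements of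
the quotient `Quot (CPairRel G P)`. -/
def CPairRel {n : ℕ} (G : WGraph (Fin n)) (P : Type) [AddCommMonoid P]
    (p q : CPair G P) : Prop :=
  ∃ u : TIso p.T q.T, ∀ x, u.g.e (p.φ.f x) = q.φ.f x

/-- The pair `(Γ, φ)` is (isomorphic to) the pair `(Γ_f, φ_{S_f})` associated to the
monoid homomorphism `f : ℕ^{E(G)} → P`: the set of edges contracted by `φ` is
exactly `S_f = {e | f [e] = 0}`, and every non-contracted edge `e` of `G` is given
the length `f [e]` in `Γ` (where `[e] = Pi.single e 1` is the generator of the free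
commutative monoid `ℕ^{E(G)}` corresponding to `e`). -/
def Matches {n : ℕ} (G : WGraph (Fin n)) {P : Type} [AddCommMonoid P]
    (f : (G.Edge → ℕ) →+ P) (p : CPair G P) : Prop :=
  (∀ e : G.Edge, e.1 ∈ p.φ.contractedSet ↔ f (Pi.single e 1) = 0) ∧
  (∀ (e : G.Edge) (x : G.X), x ∈ e.1 → p.T.G.r (p.φ.f x) ≠ p.φ.f x →
    p.T.len (p.φ.f x) = f (Pi.single e 1))

namespace WGraph

variable {μ : Type} (G : WGraph μ)

-- ### New material starts here

theorem flag_of_ne {x : G.X} (h : G.ι x ≠ x) : G.r x ≠ x :=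
  fun hv => h (G.ι_fix x hv)

theorem iota_flag {x : G.X} (h : G.ι x ≠ x) : G.r (G.ι x) ≠ G.ι x := by
  intro hv
  have h2 := G.ι_fix _ hv
  rw [G.ι_invol] at h2
  exact h h2.symm

theorem flag_iota {x : G.X} (h : G.r x ≠ x) : G.r (G.ι x) ≠ G.ι x := by
  by_cases hx : G.ι x = x
  · rw [hx]; exact h
  · exact G.iota_flag hx

theorem iota_ne_iota {x : G.X} (h : G.ι x ≠ x) : G.ι (G.ι x) ≠ G.ι x := by
  rw [G.ι_invol]; exact fun hh => h hh.symm

theorem mem_edgeSet {e : Finset G.X} :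
    e ∈ G.edgeSet ↔ ∃ x, G.ι x ≠ x ∧ {x, G.ι x} = e := by
  simp [edgeSet, subEdgeSet, Finset.mem_image, Finset.mem_filter]

def edgeOf (x : G.X) (h : G.ι x ≠ x) : G.Edge :=
  ⟨{x, G.ι x}, G.mem_edgeSet.2 ⟨x, h, rfl⟩⟩

theorem edgeOf_iota (x : G.X) (h : G.ι x ≠ x) (h' : G.ι (G.ι x) ≠ G.ι x) :
    G.edgeOf (G.ι x) h' = G.edgeOf x h := by
  apply Subtype.ext
  show ({G.ι x, G.ι (G.ι x)} : Finset G.X) = {x, G.ι x}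
  rw [G.ι_invol, Finset.pair_comm]

theorem edge_spec (e : G.Edge) : ∃ x, ∃ h : G.ι x ≠ x, e = G.edgeOf x h := by
  obtain ⟨x, h, he⟩ := G.mem_edgeSet.1 e.2
  exact ⟨x, h, Subtype.ext he.symm⟩

theorem mem_edgeOf (x : G.X) (h : G.ι x ≠ x) : x ∈ (G.edgeOf x h).1 := by
  simp [edgeOf]

theorem mem_edge {e : G.Edge} {x : G.X} (hx : x ∈ e.1) :
    ∃ h : G.ι x ≠ x, e = G.edgeOf x h := by
  obtain ⟨z, hz, he⟩ := G.edge_spec e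
  rw [he] at hx
  have hx' : x ∈ ({z, G.ι z} : Finset G.X) := hx
  rcases Finset.mem_insert.1 hx' with h1 | h1
  · subst h1; exact ⟨hz, he⟩
  · have h1 : x = G.ι z := Finset.mem_singleton.1 h1
    subst h1
    exact ⟨G.iota_ne_iota hz, he.trans (G.edgeOf_iota z hz _).symm⟩

theorem subAdj_symm {A : Finset G.X} (hA : ∀ x ∈ A, G.ι x ∈ A) :
    Symmetric (G.subAdj A) := by
  rintro v u ⟨g, hg, hfl, rfl, rfl⟩
  exact ⟨G.ι g, hA g hg, G.flag_iota hfl, rfl, by rw [G.ι_invol]⟩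

theorem subEdgeSet_mono {A B : Finset G.X} (h : A ⊆ B) :
    G.subEdgeSet A ⊆ G.subEdgeSet B :=
  Finset.image_subset_image (Finset.filter_subset_filter _ h)

/-- Key combinatorial bound: a connected, `ι`- and `r`-closed subgraph has
`#V ≤ #E + 1`. -/
theorem conn_card_bound : ∀ (k : ℕ) (A : Finset G.X),
    (G.subEdgeSet A).card = k → (∀ x ∈ A, G.ι x ∈ A ∧ G.r x ∈ A) →
    G.SubConnected A →
    (A.filter (fun x => G.r x = x)).card ≤ k + 1 := by
  intro k
  induction k using Nat.strong_induction_on with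
  | _ k IH =>
  intro A hcard hcl hconn
  match k, hcard with
  | 0, hcard =>
    -- no edges: all vertices equal
    have hone : ∀ v u, Relation.ReflTransGen (G.subAdj A) v u → v = u := by
      intro v u h
      induction h with
      | refl => rfl
      | tail _ hstep ih =>
        obtain ⟨g, hg, hfl, h1, h2⟩ := hstep
        by_cases hig : G.ι g = g
        · rw [ih, ← h1, ← h2, hig]
        · exfalso
          have : ({g, G.ι g} : Finset G.X) ∈ G.subEdgeSet A :=
            Finset.mem_image.2 ⟨g, Finset.mem_filter.2 ⟨hg, hig⟩, rfl⟩
          rw [Finset.card_eq_zero.1 hcard] at this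
          exact absurd this (Finset.notMem_empty _)
    apply Finset.card_le_one.2
    · intro a ha b hb
      rw [Finset.mem_filter] at ha hb
      exact hone a b (hconn.2 a ha.1 b hb.1 ha.2 hb.2)
  | (k+1), hcard =>
    -- pick an edge
    have hne : (G.subEdgeSet A).Nonempty := by
      rw [← Finset.card_pos, hcard]; omega
    obtain ⟨e, he⟩ := hne
    obtain ⟨x, hxA, hix, hex⟩ : ∃ x, x ∈ A ∧ G.ι x ≠ x ∧ {x, G.ι x} = e := by
      obtain ⟨x, hx, hex⟩ := Finset.mem_image.1 he
      rw [Finset.mem_filter] at hx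
      exact ⟨x, hx.1, hx.2, hex⟩
    subst hex
    have hrx : G.r x ≠ x := G.flag_of_ne hix
    have hrix : G.r (G.ι x) ≠ G.ι x := G.iota_flag hix
    set A' := (A.erase x).erase (G.ι x) with hA'
    have memA' : ∀ z, z ∈ A' ↔ z ∈ A ∧ z ≠ x ∧ z ≠ G.ι x := by
      intro z
      simp only [hA', Finset.mem_erase]
      tauto
    have hA'sub : A' ⊆ A := fun z hz => ((memA' z).1 hz).1
    -- vertices unchanged
    have hvx : ∀ z : G.X, G.r z = z → z ≠ x ∧ z ≠ G.ι x := by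
      intro z hz
      constructor
      · rintro rfl; exact hrx hz
      · rintro rfl; exact hrix hz
    have hVeq : A'.filter (fun z => G.r z = z) = A.filter (fun z => G.r z = z) := by
      apply Finset.ext; intro z
      simp only [Finset.mem_filter, memA']
      constructor
      · rintro ⟨⟨h1, _, _⟩, h4⟩; exact ⟨h1, h4⟩
      · rintro ⟨h1, h2⟩; exact ⟨⟨h1, hvx z h2⟩, h2⟩
    -- closure of A'
    have hcl' : ∀ z ∈ A', G.ι z ∈ A' ∧ G.r z ∈ A' := by
      intro z hz
      rw [memA'] at hz
      obtain ⟨hzA, hz1, hz2⟩ := hz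
      constructor
      · rw [memA']
        refine ⟨(hcl z hzA).1, ?_, ?_⟩
        · intro h; apply hz2; rw [← h, G.ι_invol]  -- ι z = x → z = ι x
        · intro h; apply hz1
          have := congrArg G.ι h
          rw [G.ι_invol, G.ι_invol] at this
          exact this
      · rw [memA']
        refine ⟨(hcl z hzA).2, ?_⟩
        exact hvx _ (G.r_idem z)
    -- edges of A'
    have hEeq : G.subEdgeSet A' = (G.subEdgeSet A).erase {x, G.ι x} := by
      apply Finset.ext; intro e'
      constructor
      · intro h
        obtain ⟨z, hz, hez⟩ := Finset.mem_image.1 h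
        rw [Finset.mem_filter, memA'] at hz
        obtain ⟨⟨hzA, hz1, hz2⟩, hz3⟩ := hz
        rw [Finset.mem_erase]
        constructor
        · intro hcon
          have : z ∈ ({x, G.ι x} : Finset G.X) := by
            rw [← hcon, ← hez]; exact Finset.mem_insert_self _ _
          rcases Finset.mem_insert.1 this with h | h
          · exact hz1 h
          · exact hz2 (Finset.mem_singleton.1 h)
        · exact Finset.mem_image.2 ⟨z, Finset.mem_filter.2 ⟨hzA, hz3⟩, hez⟩
      · intro h
        rw [Finset.mem_erase] at h
        obtain ⟨hne', h⟩ := h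
        obtain ⟨z, hz, hez⟩ := Finset.mem_image.1 h
        rw [Finset.mem_filter] at hz
        refine Finset.mem_image.2 ⟨z, Finset.mem_filter.2 ⟨?_, hz.2⟩, hez⟩
        rw [memA']
        refine ⟨hz.1, ?_, ?_⟩
        · rintro rfl; exact hne' hez.symm
        · rintro rfl
          apply hne'
          rw [← hez, G.ι_invol, Finset.pair_comm]
    classical
    have hxe : ({x, G.ι x} : Finset G.X) ∈ G.subEdgeSet A :=
      Finset.mem_image.2 ⟨x, Finset.mem_filter.2 ⟨hxA, hix⟩, rfl⟩
    have hEcard : (G.subEdgeSet A').card = k := by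
      rw [hEeq, Finset.card_erase_of_mem hxe, hcard]
      omega
    have hsymm' : Symmetric (G.subAdj A') := G.subAdj_symm (fun z hz => (hcl' z hz).1)
    have hsymmR : Symmetric (Relation.ReflTransGen (G.subAdj A')) :=
      fun a b h => (@Relation.ReflTransGen.stdSymm _ _ ⟨hsymm'⟩).symm a b h
    set reach := Relation.ReflTransGen (G.subAdj A') with hreachdef
    have transfer : ∀ v u, G.subAdj A v u →
        reach v u ∨ (v = G.r x ∧ u = G.r (G.ι x)) ∨ (v = G.r (G.ι x) ∧ u = G.r x) := by
      rintro v u ⟨g, hg, hfl, rfl, rfl⟩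
      by_cases h1 : g = x
      · subst h1; right; left; exact ⟨rfl, rfl⟩
      by_cases h2 : g = G.ι x
      · subst h2; right; right
        exact ⟨rfl, by rw [G.ι_invol]⟩
      · left
        exact Relation.ReflTransGen.single ⟨g, (memA' g).2 ⟨hg, h1, h2⟩, hfl, rfl, rfl⟩
    have hrxA' : G.r x ∈ A' := by
      rw [memA']; exact ⟨(hcl x hxA).2, hvx _ (G.r_idem x)⟩
    have hrixA' : G.r (G.ι x) ∈ A' := by
      rw [memA']
      exact ⟨(hcl _ (hcl x hxA).1).2, hvx _ (G.r_idem _)⟩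
    by_cases hbr : reach (G.r x) (G.r (G.ι x))
    · -- A' is still connected
      have full : ∀ v u, Relation.ReflTransGen (G.subAdj A) v u → reach v u := by
        intro v u h
        induction h with
        | refl => exact Relation.ReflTransGen.refl
        | tail _ hstep ih =>
          rcases transfer _ _ hstep with h | ⟨h1, h2⟩ | ⟨h1, h2⟩
          · exact ih.trans h
          · subst h1; subst h2; exact ih.trans hbr
          · subst h1; subst h2; exact ih.trans (hsymmR hbr)
      have hconn' : G.SubConnected A' :=
        ⟨⟨G.r x, hrxA', G.r_idem x⟩,
         fun v hv u hu hv' hu' => full v u (hconn.2 v (hA'sub hv) u (hA'sub hu) hv' hu')⟩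
      have := IH k (by omega) A' hEcard hcl' hconn'
      rw [hVeq] at this
      omega
    · -- split into two components
      have reachCD : ∀ u, Relation.ReflTransGen (G.subAdj A) (G.r x) u →
          reach (G.r x) u ∨ reach (G.r (G.ι x)) u := by
        intro u h
        induction h with
        | refl => left; exact Relation.ReflTransGen.refl
        | tail _ hstep ih =>
          rcases transfer _ _ hstep with h | ⟨h1, h2⟩ | ⟨h1, h2⟩
          · rcases ih with ih | ih
            · left; exact ih.trans h
            · right; exact ih.trans h
          · subst h2; right; exact Relation.ReflTransGen.refl
          · subst h2; left; exact Relation.ReflTransGen.refl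
      have coverV : ∀ u ∈ A, G.r u = u → reach (G.r x) u ∨ reach (G.r (G.ι x)) u := by
        intro u hu hu'
        exact reachCD u (hconn.2 _ (hA'sub hrxA') _ hu (G.r_idem x) hu')
      have gen : ∀ b, b ∈ A' → G.r b = b →
          (∀ z ∈ A'.filter (fun z => reach b (G.r z)),
            G.ι z ∈ A'.filter (fun z => reach b (G.r z)) ∧
            G.r z ∈ A'.filter (fun z => reach b (G.r z))) ∧
          G.SubConnected (A'.filter (fun z => reach b (G.r z))) := by
        intro b hb hbv
        have hclb : ∀ z ∈ A'.filter (fun z => reach b (G.r z)),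
            G.ι z ∈ A'.filter (fun z => reach b (G.r z)) ∧
            G.r z ∈ A'.filter (fun z => reach b (G.r z)) := by
          intro z hz
          rw [Finset.mem_filter] at hz
          obtain ⟨hz1, hz2⟩ := hz
          constructor
          · rw [Finset.mem_filter]
            refine ⟨(hcl' z hz1).1, ?_⟩
            by_cases hv : G.r z = z
            · rw [G.ι_fix z hv]; exact hz2
            · exact hz2.trans (Relation.ReflTransGen.single ⟨z, hz1, hv, rfl, rfl⟩)
          · rw [Finset.mem_filter]
            exact ⟨(hcl' z hz1).2, by rw [G.r_idem]; exact hz2⟩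
        have restrict : ∀ u, reach b u →
            Relation.ReflTransGen (G.subAdj (A'.filter (fun z => reach b (G.r z)))) b u := by
          intro u h
          induction h with
          | refl => exact Relation.ReflTransGen.refl
          | tail hh hstep ih =>
            obtain ⟨g, hg, hfl, h1, h2⟩ := hstep
            have hgC : g ∈ A'.filter (fun z => reach b (G.r z)) :=
              Finset.mem_filter.2 ⟨hg, by rw [h1]; exact hh⟩
            exact ih.tail ⟨g, hgC, hfl, h1, h2⟩
        have hsymmb : Symmetric (G.subAdj (A'.filter (fun z => reach b (G.r z)))) :=
          G.subAdj_symm (fun z hz => (hclb z hz).1)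
        refine ⟨hclb, ⟨b, Finset.mem_filter.2 ⟨hb, by rw [hbv]⟩, hbv⟩, ?_⟩
        intro v hv u hu hv' hu'
        rw [Finset.mem_filter] at hv hu
        have h1 := restrict v (by rw [hv'] at hv; exact hv.2)
        have h2 := restrict u (by rw [hu'] at hu; exact hu.2)
        exact ((@Relation.ReflTransGen.stdSymm _ _ ⟨hsymmb⟩).symm _ _ h1).trans h2
      obtain ⟨hclC, hconnC⟩ := gen (G.r x) hrxA' (G.r_idem x)
      obtain ⟨hclD, hconnD⟩ := gen (G.r (G.ι x)) hrixA' (G.r_idem _)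
      set AC := A'.filter (fun z => reach (G.r x) (G.r z)) with hACdef
      set AD := A'.filter (fun z => reach (G.r (G.ι x)) (G.r z)) with hADdef
      have hdisj : Disjoint AC AD := by
        rw [Finset.disjoint_left]
        intro z hz1 hz2
        rw [Finset.mem_filter] at hz1 hz2
        exact hbr (hz1.2.trans (hsymmR hz2.2))
      have hEdisj : Disjoint (G.subEdgeSet AC) (G.subEdgeSet AD) := by
        rw [Finset.disjoint_left]
        intro e' h1 h2
        obtain ⟨z, hz, hez⟩ := Finset.mem_image.1 h1
        obtain ⟨z', hz', hez'⟩ := Finset.mem_image.1 h2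
        rw [Finset.mem_filter] at hz hz'
        have hz'mem : z' ∈ ({z, G.ι z} : Finset G.X) := by
          rw [hez, ← hez']; exact Finset.mem_insert_self _ _
        have hzC : z' ∈ AC := by
          rcases Finset.mem_insert.1 hz'mem with h | h
          · subst h; exact hz.1
          · rw [Finset.mem_singleton.1 h]; exact (hclC z hz.1).1
        exact (Finset.disjoint_left.1 hdisj hzC) hz'.1
      have hEcards : (G.subEdgeSet AC).card + (G.subEdgeSet AD).card ≤ k := by
        rw [← Finset.card_union_of_disjoint hEdisj]
        calc (G.subEdgeSet AC ∪ G.subEdgeSet AD).card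
            ≤ (G.subEdgeSet A').card := Finset.card_le_card (Finset.union_subset
              (G.subEdgeSet_mono (Finset.filter_subset _ _))
              (G.subEdgeSet_mono (Finset.filter_subset _ _)))
          _ = k := hEcard
      have hVcover : A'.filter (fun z => G.r z = z) ⊆
          AC.filter (fun z => G.r z = z) ∪ AD.filter (fun z => G.r z = z) := by
        intro z hz
        rw [Finset.mem_filter] at hz
        rcases coverV z (hA'sub hz.1) hz.2 with h | h
        · exact Finset.mem_union.2 (Or.inl (Finset.mem_filter.2
            ⟨Finset.mem_filter.2 ⟨hz.1, by rw [hz.2]; exact h⟩, hz.2⟩))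
        · exact Finset.mem_union.2 (Or.inr (Finset.mem_filter.2
            ⟨Finset.mem_filter.2 ⟨hz.1, by rw [hz.2]; exact h⟩, hz.2⟩))
      have hVdisj : Disjoint (AC.filter (fun z => G.r z = z)) (AD.filter (fun z => G.r z = z)) :=
        Finset.disjoint_filter_filter hdisj
      have hC := IH (G.subEdgeSet AC).card (by omega) AC rfl hclC hconnC
      have hD := IH (G.subEdgeSet AD).card (by omega) AD rfl hclD hconnD
      have hVle : (A'.filter (fun z => G.r z = z)).card ≤
          (AC.filter (fun z => G.r z = z)).card + (AD.filter (fun z => G.r z = z)).card := by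
        calc (A'.filter (fun z => G.r z = z)).card
            ≤ (AC.filter (fun z => G.r z = z) ∪ AD.filter (fun z => G.r z = z)).card :=
              Finset.card_le_card hVcover
          _ = _ := Finset.card_union_of_disjoint hVdisj
      rw [← hVeq]
      omega

theorem subGenus_nonneg {A : Finset G.X} (hcl : ∀ x ∈ A, G.ι x ∈ A ∧ G.r x ∈ A)
    (hconn : G.SubConnected A) : 0 ≤ G.subGenus A := by
  have h := G.conn_card_bound (G.subEdgeSet A).card A rfl hcl hconn
  have h2 : (0:ℤ) ≤ ∑ v ∈ A.filter (fun x => G.r x = x), (G.w v : ℤ) :=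
    Finset.sum_nonneg (fun i _ => Int.natCast_nonneg _)
  have h3 : (0:ℤ) ≤ G.subB1 A := by
    unfold subB1
    have := (Int.ofNat_le).2 h
    push_cast at this ⊢
    omega
  unfold subGenus
  omega


section Contraction

open scoped Classical

variable {μ : Type} (G : WGraph μ) {P : Type} [AddCommMonoid P] (f : (G.Edge → ℕ) →+ P)

/-- The flag `x` belongs to a contracted edge. -/
def Con (x : G.X) : Prop := ∃ h : G.ι x ≠ x, f (Pi.single (G.edgeOf x h) 1) = 0

/-- `x` is a vertex or a contracted flag. -/
def Good (x : G.X) : Prop := G.r x = x ∨ G.Con f x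

def CRel (x y : G.X) : Prop := G.Con f x ∧ (y = G.r x ∨ y = G.ι x)

def csetoid : Setoid G.X := Relation.EqvGen.setoid (G.CRel f)

def cmk : G.X → Quotient (G.csetoid f) := Quotient.mk _

theorem cmk_surj : Function.Surjective (G.cmk f) := Quotient.exists_rep

theorem cmk_eq_iff {x y : G.X} :
    G.cmk f x = G.cmk f y ↔ Relation.EqvGen (G.CRel f) x y :=
  Quotient.eq

theorem con_iota {x : G.X} (h : G.Con f x) : G.Con f (G.ι x) := by
  obtain ⟨hx, h0⟩ := h
  refine ⟨G.iota_ne_iota hx, ?_⟩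
  rw [G.edgeOf_iota x hx]
  exact h0

theorem con_flag {x : G.X} (h : G.Con f x) : G.r x ≠ x := G.flag_of_ne h.1

theorem cmk_r_of_con {x : G.X} (h : G.Con f x) : G.cmk f (G.r x) = G.cmk f x :=
  (G.cmk_eq_iff f).2 (Relation.EqvGen.symm _ _ (Relation.EqvGen.rel _ _ ⟨h, Or.inl rfl⟩))

theorem cmk_i_of_con {x : G.X} (h : G.Con f x) : G.cmk f (G.ι x) = G.cmk f x :=
  (G.cmk_eq_iff f).2 (Relation.EqvGen.symm _ _ (Relation.EqvGen.rel _ _ ⟨h, Or.inr rfl⟩))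

theorem good_r {x : G.X} (h : G.Good f x) : G.cmk f (G.r x) = G.cmk f x := by
  rcases h with h | h
  · rw [h]
  · exact G.cmk_r_of_con f h

theorem good_or_eq {x y : G.X} (h : Relation.EqvGen (G.CRel f) x y) :
    x = y ∨ (G.Good f x ∧ G.Good f y) := by
  induction h with
  | rel a b hab =>
    right
    obtain ⟨hc, h⟩ := hab
    refine ⟨Or.inr hc, ?_⟩
    rcases h with h | h
    · subst h; exact Or.inl (G.r_idem a)
    · subst h; exact Or.inr (G.con_iota f hc)
  | refl a => left; rfl
  | symm a b _ ih => tauto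
  | trans a b c _ _ ih1 ih2 =>
    rcases ih1 with rfl | h1
    · exact ih2
    · rcases ih2 with rfl | h2
      · right; exact h1
      · right; exact ⟨h1.1, h2.2⟩

theorem eq_of_not_good {x y : G.X} (hx : ¬ G.Good f x)
    (h : G.cmk f x = G.cmk f y) : x = y := by
  rcases G.good_or_eq f ((G.cmk_eq_iff f).1 h) with h | h
  · exact h
  · exact absurd h.1 hx

theorem not_good_iota {x : G.X} (hx : ¬ G.Good f x) : ¬ G.Good f (G.ι x) := by
  intro h
  apply hx
  rcases h with h | h
  · left
    have := G.ι_fix _ h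
    rw [G.ι_invol] at this
    rw [← this] at h
    exact h
  · right
    have := G.con_iota f h
    rwa [G.ι_invol] at this

theorem not_good_flag {x : G.X} (hx : ¬ G.Good f x) : G.r x ≠ x :=
  fun h => hx (Or.inl h)

theorem not_good_not_con {x : G.X} (hx : ¬ G.Good f x) : ¬ G.Con f x :=
  fun h => hx (Or.inr h)

theorem cmk_r_wd : ∀ (x y : G.X), Relation.EqvGen (G.CRel f) x y →
    G.cmk f (G.r x) = G.cmk f (G.r y) := by
  intro x y h
  rcases G.good_or_eq f h with rfl | ⟨h1, h2⟩
  · rfl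
  · rw [G.good_r f h1, G.good_r f h2]
    exact (G.cmk_eq_iff f).2 h

theorem cmk_i_wd : ∀ (x y : G.X), Relation.EqvGen (G.CRel f) x y →
    (if G.Good f x then G.cmk f x else G.cmk f (G.ι x)) =
    (if G.Good f y then G.cmk f y else G.cmk f (G.ι y)) := by
  intro x y h
  rcases G.good_or_eq f h with rfl | ⟨h1, h2⟩
  · rfl
  · rw [if_pos h1, if_pos h2]
    exact (G.cmk_eq_iff f).2 h

/-- The weighted edge contraction `G/S_f`. -/
noncomputable def CGraph : WGraph μ where
  X := Quotient (G.csetoid f)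
  fin := Fintype.ofSurjective (G.cmk f) (G.cmk_surj f)
  deq := Classical.decEq _
  r := Quotient.lift (fun x => G.cmk f (G.r x)) (G.cmk_r_wd f)
  ι := Quotient.lift (fun x => if G.Good f x then G.cmk f x else G.cmk f (G.ι x))
    (G.cmk_i_wd f)
  r_idem := by
    intro c
    obtain ⟨x, rfl⟩ := G.cmk_surj f c
    show G.cmk f (G.r (G.r x)) = G.cmk f (G.r x)
    rw [G.r_idem]
  ι_invol := by
    intro c
    obtain ⟨x, rfl⟩ := G.cmk_surj f c
    show Quotient.lift _ (G.cmk_i_wd f)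
      (if G.Good f x then G.cmk f x else G.cmk f (G.ι x)) = G.cmk f x
    by_cases h : G.Good f x
    · rw [if_pos h]
      show (if G.Good f x then G.cmk f x else G.cmk f (G.ι x)) = G.cmk f x
      rw [if_pos h]
    · rw [if_neg h]
      show (if G.Good f (G.ι x) then G.cmk f (G.ι x) else G.cmk f (G.ι (G.ι x)))
        = G.cmk f x
      rw [if_neg (G.not_good_iota f h), G.ι_invol]
  ι_fix := by
    intro c
    obtain ⟨x, rfl⟩ := G.cmk_surj f c
    intro h
    show (if G.Good f x then G.cmk f x else G.cmk f (G.ι x)) = G.cmk f x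
    by_cases hg : G.Good f x
    · rw [if_pos hg]
    · have h' : G.cmk f (G.r x) = G.cmk f x := h
      exact absurd (G.eq_of_not_good f hg h'.symm).symm (G.not_good_flag f hg)
  w := fun c => (G.subGenus (Finset.univ.filter (fun x => G.cmk f x = c))).toNat
  mark := fun j => G.cmk f (G.mark j)
  mark_flag := by
    intro j
    show G.cmk f (G.r (G.mark j)) ≠ G.cmk f (G.mark j)
    intro h
    have hng : ¬ G.Good f (G.mark j) := by
      intro hg
      rcases hg with hg | hg
      · exact G.mark_flag j hg
      · exact hg.1 (G.mark_leg j)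
    have := G.eq_of_not_good f hng h.symm
    exact G.mark_flag j this.symm
  mark_leg := by
    intro j
    show (if G.Good f (G.mark j) then _ else G.cmk f (G.ι (G.mark j))) = G.cmk f (G.mark j)
    have hng : ¬ G.Good f (G.mark j) := by
      intro hg
      rcases hg with hg | hg
      · exact G.mark_flag j hg
      · exact hg.1 (G.mark_leg j)
    rw [if_neg hng, G.mark_leg]
  mark_inj := by
    intro j k h
    have hng : ¬ G.Good f (G.mark j) := by
      intro hg
      rcases hg with hg | hg
      · exact G.mark_flag j hg
      · exact hg.1 (G.mark_leg j)
    exact G.mark_inj (G.eq_of_not_good f hng h)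
  mark_surj := by
    intro c hr hι
    obtain ⟨x, rfl⟩ := G.cmk_surj f c
    have hng : ¬ G.Good f x := by
      intro hg
      exact hr (G.good_r f hg)
    have hfix : G.ι x = x := by
      apply G.eq_of_not_good f (G.not_good_iota f hng)
      have : (if G.Good f x then G.cmk f x else G.cmk f (G.ι x)) = G.cmk f x := hι
      rwa [if_neg hng] at this
    obtain ⟨j, hj⟩ := G.mark_surj x (G.not_good_flag f hng) hfix
    exact ⟨j, congrArg (G.cmk f) hj⟩

theorem good_i {x : G.X} (h : G.Good f x) : G.cmk f (G.ι x) = G.cmk f x := by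
  rcases h with h | h
  · rw [G.ι_fix x h]
  · exact G.cmk_i_of_con f h

theorem cg_r (x : G.X) : (G.CGraph f).r (G.cmk f x) = G.cmk f (G.r x) := rfl

theorem cg_i_good {x : G.X} (h : G.Good f x) :
    (G.CGraph f).ι (G.cmk f x) = G.cmk f x := by
  show (if G.Good f x then G.cmk f x else G.cmk f (G.ι x)) = G.cmk f x
  rw [if_pos h]

theorem cg_i_bad {x : G.X} (h : ¬ G.Good f x) :
    (G.CGraph f).ι (G.cmk f x) = G.cmk f (G.ι x) := by
  show (if G.Good f x then G.cmk f x else G.cmk f (G.ι x)) = G.cmk f (G.ι x)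
  rw [if_neg h]

theorem cg_i (x : G.X) : (G.CGraph f).ι (G.cmk f x) = G.cmk f (G.ι x) := by
  by_cases h : G.Good f x
  · rw [G.cg_i_good f h]; exact (G.good_i f h).symm
  · exact G.cg_i_bad f h

theorem class_all_good {c : Quotient (G.csetoid f)} (hc : (G.CGraph f).r c = c) :
    ∀ x, G.cmk f x = c → G.Good f x := by
  intro x hx
  by_contra hng
  subst hx
  have h : G.cmk f (G.r x) = G.cmk f x := hc
  exact G.not_good_flag f hng (G.eq_of_not_good f hng h.symm).symm

theorem class_vertex {c : Quotient (G.csetoid f)} (hc : (G.CGraph f).r c = c) :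
    ∃ v, G.cmk f v = c ∧ G.r v = v := by
  obtain ⟨x, rfl⟩ := G.cmk_surj f c
  exact ⟨G.r x, hc, G.r_idem x⟩

noncomputable def classSet (c : Quotient (G.csetoid f)) : Finset G.X :=
  Finset.univ.filter (fun x => G.cmk f x = c)

theorem mem_classSet {c : Quotient (G.csetoid f)} {x : G.X} :
    x ∈ G.classSet f c ↔ G.cmk f x = c := by
  simp [classSet]

theorem classSet_closed {c : Quotient (G.csetoid f)} (hc : (G.CGraph f).r c = c) :
    ∀ x ∈ G.classSet f c, G.ι x ∈ G.classSet f c ∧ G.r x ∈ G.classSet f c := by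
  intro x hx
  rw [G.mem_classSet f] at hx
  have hg : G.Good f x := G.class_all_good f hc x hx
  constructor
  · rw [G.mem_classSet f, G.good_i f hg]; exact hx
  · rw [G.mem_classSet f, G.good_r f hg]; exact hx

theorem class_chain {c : Quotient (G.csetoid f)} (hc : (G.CGraph f).r c = c) :
    ∀ x y, Relation.EqvGen (G.CRel f) x y → G.cmk f x = c →
      Relation.ReflTransGen (G.subAdj (G.classSet f c)) (G.r x) (G.r y) := by
  have hsym : Symmetric (G.subAdj (G.classSet f c)) :=
    G.subAdj_symm (fun z hz => (G.classSet_closed f hc z hz).1)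
  intro x y h
  induction h with
  | rel a b hab =>
    intro ha
    obtain ⟨hcon, hb⟩ := hab
    rcases hb with rfl | rfl
    · rw [G.r_idem]
    · exact Relation.ReflTransGen.single
        ⟨a, (G.mem_classSet f).2 ha, G.con_flag f hcon, rfl, rfl⟩
  | refl a => intro _; exact Relation.ReflTransGen.refl
  | symm a b hab ih =>
    intro hb
    have ha : G.cmk f a = c := by
      rw [← hb]; exact (G.cmk_eq_iff f).2 hab
    exact (@Relation.ReflTransGen.stdSymm _ _ ⟨hsym⟩).symm _ _ (ih ha)
  | trans a b c' hab hbc ih1 ih2 =>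
    intro ha
    have hb : G.cmk f b = c := by
      rw [← ha]; exact ((G.cmk_eq_iff f).2 hab).symm
    exact (ih1 ha).trans (ih2 hb)

theorem classSet_subconn {c : Quotient (G.csetoid f)} (hc : (G.CGraph f).r c = c) :
    G.SubConnected (G.classSet f c) := by
  obtain ⟨v, hv, hvv⟩ := G.class_vertex f hc
  refine ⟨⟨v, (G.mem_classSet f).2 hv, hvv⟩, ?_⟩
  intro a ha b hb ha' hb'
  rw [G.mem_classSet f] at ha hb
  have h : Relation.EqvGen (G.CRel f) a b := (G.cmk_eq_iff f).1 (ha.trans hb.symm)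
  have h2 := G.class_chain f hc a b h ha
  rwa [ha', hb'] at h2

theorem cg_w {c : Quotient (G.csetoid f)} (hc : (G.CGraph f).r c = c) :
    ((G.CGraph f).w c : ℤ) = G.subGenus (G.classSet f c) := by
  show ((G.subGenus (G.classSet f c)).toNat : ℤ) = _
  exact Int.toNat_of_nonneg
    (G.subGenus_nonneg (G.classSet_closed f hc) (G.classSet_subconn f hc))

/-- The canonical contraction morphism `G → G/S_f`. -/
noncomputable def CMor : GMor G (G.CGraph f) where
  f := G.cmk f
  comm_r := fun _ => rfl
  comm_i := fun x => (G.cg_i f x).symm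
  mark_comm := fun _ => rfl
  flag_fiber := by
    intro c hc
    obtain ⟨x, rfl⟩ := G.cmk_surj f c
    have hng : ¬ G.Good f x := fun hg => hc (G.good_r f hg)
    exact ⟨x, rfl, fun z hz => (G.eq_of_not_good f hng hz.symm).symm⟩
  fiber_conn := by
    intro c hc
    have hset : G.fiber (G.cmk f) c = G.classSet f c :=
      Finset.ext (fun x => by simp [fiber, classSet]; exact Iff.rfl)
    rw [hset]
    exact G.classSet_subconn f hc
  fiber_genus := by
    intro c hc
    have hset : G.fiber (G.cmk f) c = G.classSet f c :=
      Finset.ext (fun x => by simp [fiber, classSet]; exact Iff.rfl)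
    rw [hset]
    exact (G.cg_w f hc).symm

noncomputable def lenfun (x : G.X) : P :=
  if h : G.ι x ≠ x ∧ ¬ G.Con f x then f (Pi.single (G.edgeOf x h.1) 1) else 0

theorem lenfun_good {x : G.X} (h : G.Good f x) : G.lenfun f x = 0 := by
  rcases h with h | h
  · rw [lenfun, dif_neg]; rintro ⟨h1, -⟩; exact h1 (G.ι_fix x h)
  · rw [lenfun, dif_neg]; rintro ⟨-, h2⟩; exact h2 h

theorem lenfun_wd : ∀ x y, Relation.EqvGen (G.CRel f) x y →
    G.lenfun f x = G.lenfun f y := by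
  intro x y h
  rcases G.good_or_eq f h with rfl | ⟨h1, h2⟩
  · rfl
  · rw [G.lenfun_good f h1, G.lenfun_good f h2]

theorem lenfun_iota (x : G.X) : G.lenfun f (G.ι x) = G.lenfun f x := by
  by_cases hι : G.ι x = x
  · rw [hι]
  · by_cases hcon : G.Con f x
    · rw [G.lenfun_good f (Or.inr (G.con_iota f hcon)),
        G.lenfun_good f (Or.inr hcon)]
    · have h1 : G.ι (G.ι x) ≠ G.ι x := G.iota_ne_iota hι
      have h2 : ¬ G.Con f (G.ι x) := fun hc => hcon (by
        have := G.con_iota f hc; rwa [G.ι_invol] at this)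
      rw [lenfun, lenfun, dif_pos ⟨h1, h2⟩, dif_pos (⟨hι, hcon⟩ : G.ι x ≠ x ∧ ¬ G.Con f x),
        G.edgeOf_iota x hι h1]

theorem cg_map_chain : ∀ v u, Relation.ReflTransGen (G.subAdj Finset.univ) v u →
    Relation.ReflTransGen ((G.CGraph f).subAdj Finset.univ) (G.cmk f v) (G.cmk f u) := by
  intro v u h
  induction h with
  | refl => exact Relation.ReflTransGen.refl
  | tail _ hstep ih =>
    obtain ⟨g, -, hfl, rfl, rfl⟩ := hstep
    by_cases hcon : G.Con f g
    · have h1 : G.cmk f (G.r g) = G.cmk f (G.r (G.ι g)) := by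
        rw [G.cmk_r_of_con f hcon, G.cmk_r_of_con f (G.con_iota f hcon),
          G.cmk_i_of_con f hcon]
      rw [← h1]; exact ih
    · have hng : ¬ G.Good f g := by rintro (h | h); exacts [hfl h, hcon h]
      refine ih.tail ⟨G.cmk f g, Finset.mem_univ _, ?_, rfl, ?_⟩
      · show G.cmk f (G.r g) ≠ G.cmk f g
        intro h
        exact hfl (G.eq_of_not_good f hng h.symm).symm
      · show (G.CGraph f).r ((G.CGraph f).ι (G.cmk f g)) = G.cmk f (G.r (G.ι g))
        rw [G.cg_i f g]
        rfl

theorem cg_conn (hconn : G.Connected) : (G.CGraph f).Connected := by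
  constructor
  · obtain ⟨v, -, hv⟩ := hconn.1
    refine ⟨G.cmk f v, Finset.mem_univ _, ?_⟩
    show G.cmk f (G.r v) = G.cmk f v
    rw [hv]
  · intro a _ b _ ha hb
    obtain ⟨v, hv, hvv⟩ := G.class_vertex f ha
    obtain ⟨u, hu, huu⟩ := G.class_vertex f hb
    have := G.cg_map_chain f v u
      (hconn.2 v (Finset.mem_univ _) u (Finset.mem_univ _) hvv huu)
    rwa [hv, hu] at this

/-- The tropical curve `Γ_f` over `P`. -/
noncomputable def CTrop (hconn : G.Connected) : Trop P μ where
  G := G.CGraph f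
  conn := G.cg_conn f hconn
  len := Quotient.lift (G.lenfun f) (G.lenfun_wd f)
  len_symm := by
    intro c
    obtain ⟨x, rfl⟩ := G.cmk_surj f c
    show Quotient.lift (G.lenfun f) (G.lenfun_wd f) ((G.CGraph f).ι (G.cmk f x))
      = G.lenfun f x
    rw [G.cg_i f x]
    exact G.lenfun_iota f x
  len_ne := by
    intro c hc
    obtain ⟨x, rfl⟩ := G.cmk_surj f c
    rw [G.cg_i f x] at hc
    have hι : G.ι x ≠ x := fun h => hc (by rw [h])
    have hng : ¬ G.Con f x := fun h => hc (G.cmk_i_of_con f h)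
    show G.lenfun f x ≠ 0
    rw [lenfun, dif_pos (⟨hι, hng⟩ : G.ι x ≠ x ∧ ¬ G.Con f x)]
    exact fun h0 => hng ⟨hι, h0⟩

theorem con_edge {x : G.X} (h : G.ι x ≠ x) :
    G.Con f x ↔ f (Pi.single (G.edgeOf x h) 1) = 0 :=
  ⟨fun h' => h'.2, fun h0 => ⟨h, h0⟩⟩

theorem cmor_contracted (e : G.Edge) :
    e.1 ∈ (G.CMor f).contractedSet ↔ f (Pi.single e 1) = 0 := by
  constructor
  · intro h
    obtain ⟨z, hz, hez⟩ := Finset.mem_image.1 h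
    rw [Finset.mem_filter] at hz
    obtain ⟨-, hzι, hzr⟩ := hz
    have hzr' : G.cmk f (G.r z) = G.cmk f z := hzr
    have hgood : G.Good f z := by
      by_contra hng
      exact G.not_good_flag f hng (G.eq_of_not_good f hng hzr'.symm).symm
    have hcon : G.Con f z := by
      rcases hgood with hg | hg
      · exact absurd hg (G.flag_of_ne hzι)
      · exact hg
    have he : e = G.edgeOf z hzι := Subtype.ext hez.symm
    rw [he]
    exact (G.con_edge f hzι).1 hcon
  · intro h0
    obtain ⟨x, hx, rfl⟩ := G.edge_spec e
    refine Finset.mem_image.2 ⟨x, Finset.mem_filter.2 ⟨Finset.mem_univ _, hx, ?_⟩, rfl⟩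
    exact G.cmk_r_of_con f ((G.con_edge f hx).2 h0)

theorem cmor_len (e : G.Edge) (x : G.X) (hx : x ∈ e.1)
    (hfl : (G.CGraph f).r (G.cmk f x) ≠ G.cmk f x) :
    Quotient.lift (G.lenfun f) (G.lenfun_wd f) (G.cmk f x) = f (Pi.single e 1) := by
  obtain ⟨h, rfl⟩ := G.mem_edge hx
  have hng : ¬ G.Good f x := fun hg => hfl (G.good_r f hg)
  show G.lenfun f x = _
  rw [lenfun, dif_pos (⟨h, G.not_good_not_con f hng⟩ : G.ι x ≠ x ∧ ¬ G.Con f x)]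


end Contraction


end WGraph


namespace WGraph

noncomputable instance edgeFintype {μ : Type} (G : WGraph μ) : Fintype G.Edge :=
  inferInstanceAs (Fintype {e : Finset G.X // e ∈ G.edgeSet})

end WGraph

namespace GMor

variable {μ : Type} {G G' : WGraph μ} (φ : GMor G G')

theorem vertex_to_vertex {x : G.X} (h : G.r x = x) : G'.r (φ.f x) = φ.f x := by
  rw [← φ.comm_r, h]

theorem f_i_of_vertex {x : G.X} (h : G'.r (φ.f x) = φ.f x) :
    φ.f (G.ι x) = φ.f x := by
  rw [φ.comm_i, G'.ι_fix _ h]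

theorem leg_flag {x : G.X} (h1 : G.r x ≠ x) (h2 : G.ι x = x) :
    G'.r (φ.f x) ≠ φ.f x := by
  obtain ⟨j, rfl⟩ := G.mark_surj x h1 h2
  rw [φ.mark_comm]
  exact G'.mark_flag j

theorem flag_preimage_unique {x y : G.X} (h : G'.r (φ.f x) ≠ φ.f x)
    (hxy : φ.f y = φ.f x) : y = x := by
  obtain ⟨z, hz, huniq⟩ := φ.flag_fiber (φ.f x) h
  rw [huniq y hxy, huniq x rfl]

theorem mem_contracted_iff {x : G.X} (h : G.ι x ≠ x) :
    (G.edgeOf x h).1 ∈ φ.contractedSet ↔ G'.r (φ.f x) = φ.f x := by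
  constructor
  · intro hmem
    obtain ⟨z, hz, hez⟩ := Finset.mem_image.1 hmem
    rw [Finset.mem_filter] at hz
    obtain ⟨-, hz1, hz2⟩ := hz
    have hez' : ({z, G.ι z} : Finset G.X) = {x, G.ι x} := hez
    have hzmem : z ∈ ({x, G.ι x} : Finset G.X) := by
      rw [← hez']; exact Finset.mem_insert_self _ _
    rcases Finset.mem_insert.1 hzmem with rfl | hz3
    · exact hz2
    · have hz3 : z = G.ι x := Finset.mem_singleton.1 hz3
      subst hz3
      have h4 := φ.f_i_of_vertex (x := G.ι x) hz2
      rw [G.ι_invol] at h4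
      rw [h4]; exact hz2
  · intro hv
    exact Finset.mem_image.2 ⟨x, Finset.mem_filter.2 ⟨Finset.mem_univ _, h, hv⟩, rfl⟩

end GMor

section Pairs

open WGraph

variable {n : ℕ} {G : WGraph (Fin n)} {P : Type} [AddCommMonoid P]

theorem flag_iota_ne {p : CPair G P} {z : G.X} (hz : G.ι z ≠ z)
    (h : p.T.G.r (p.φ.f z) ≠ p.φ.f z) : p.T.G.ι (p.φ.f z) ≠ p.φ.f z := by
  intro heq
  rw [← p.φ.comm_i] at heq
  exact hz (p.φ.flag_preimage_unique h heq)

theorem matches_vertex_iff (f : (G.Edge → ℕ) →+ P) (p q : CPair G P)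
    (hp : Matches G f p) (hq : Matches G f q) (x : G.X) :
    p.T.G.r (p.φ.f x) = p.φ.f x ↔ q.T.G.r (q.φ.f x) = q.φ.f x := by
  by_cases hι : G.ι x = x
  · by_cases hr : G.r x = x
    · simp [p.φ.vertex_to_vertex hr, q.φ.vertex_to_vertex hr]
    · simp [p.φ.leg_flag hr hι, q.φ.leg_flag hr hι]
  · rw [(p.φ.mem_contracted_iff hι).symm.trans (hp.1 (G.edgeOf x hι)),
      (q.φ.mem_contracted_iff hι).symm.trans (hq.1 (G.edgeOf x hι))]

theorem matches_fiber_const (f : (G.Edge → ℕ) →+ P) (p q : CPair G P)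
    (hp : Matches G f p) (hq : Matches G f q)
    {y : p.T.G.X} (hy : p.T.G.r y = y) :
    ∀ a b, p.φ.f a = y → p.φ.f b = y → q.φ.f a = q.φ.f b := by
  have hQvert : ∀ z, p.φ.f z = y → q.T.G.r (q.φ.f z) = q.φ.f z := by
    intro z hz
    rw [← matches_vertex_iff f p q hp hq z, hz, hy]
  have hstep : ∀ z, p.φ.f z = y → q.φ.f (G.r z) = q.φ.f z := by
    intro z hz
    rw [q.φ.comm_r, hQvert z hz]
  have hchain : ∀ v u, Relation.ReflTransGen (G.subAdj (G.fiber p.φ.f y)) v u →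
      q.φ.f v = q.φ.f u := by
    intro v u h
    induction h with
    | refl => rfl
    | tail _ hstepp ih =>
      obtain ⟨g, hg, hfl, rfl, rfl⟩ := hstepp
      have hgy : p.φ.f g = y := (Finset.mem_filter.1 hg).2
      have hgq : q.T.G.r (q.φ.f g) = q.φ.f g := hQvert g hgy
      have e1 : q.φ.f (G.r g) = q.φ.f g := hstep g hgy
      have e2 : q.φ.f (G.r (G.ι g)) = q.φ.f g := by
        rw [q.φ.comm_r, q.φ.comm_i, q.T.G.ι_fix _ hgq, hgq]
      rw [ih, e1, e2]
  intro a b ha hb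
  have hra : p.φ.f (G.r a) = y := by rw [p.φ.comm_r, ha, hy]
  have hrb : p.φ.f (G.r b) = y := by rw [p.φ.comm_r, hb, hy]
  have hmema : G.r a ∈ G.fiber p.φ.f y := Finset.mem_filter.2 ⟨Finset.mem_univ _, hra⟩
  have hmemb : G.r b ∈ G.fiber p.φ.f y := Finset.mem_filter.2 ⟨Finset.mem_univ _, hrb⟩
  have hc := hchain _ _ ((p.φ.fiber_conn y hy).2 (G.r a) hmema (G.r b) hmemb
    (G.r_idem a) (G.r_idem b))
  rw [← hstep a ha, ← hstep b hb]
  exact hc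

noncomputable def transfun (p q : CPair G P) : p.T.G.X → q.T.G.X := fun y =>
  if h : p.T.G.r y = y then
    q.φ.f (p.φ.fiber_conn y h).1.choose
  else q.φ.f (p.φ.flag_fiber y h).exists.choose

theorem transfun_rep (p q : CPair G P) (y : p.T.G.X) :
    ∃ x, p.φ.f x = y ∧ transfun p q y = q.φ.f x := by
  unfold transfun
  by_cases h : p.T.G.r y = y
  · rw [dif_pos h]
    obtain ⟨hmem, -⟩ := (p.φ.fiber_conn y h).1.choose_spec
    exact ⟨_, (Finset.mem_filter.1 hmem).2, rfl⟩
  · rw [dif_neg h]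
    exact ⟨_, (p.φ.flag_fiber y h).exists.choose_spec, rfl⟩

theorem transfun_spec (f : (G.Edge → ℕ) →+ P) (p q : CPair G P)
    (hp : Matches G f p) (hq : Matches G f q) (x : G.X) :
    transfun p q (p.φ.f x) = q.φ.f x := by
  obtain ⟨z, hz1, hz2⟩ := transfun_rep p q (p.φ.f x)
  rw [hz2]
  by_cases h : p.T.G.r (p.φ.f x) = p.φ.f x
  · exact matches_fiber_const f p q hp hq h z x hz1 rfl
  · rw [p.φ.flag_preimage_unique h hz1]

theorem matches_cpairrel (f : (G.Edge → ℕ) →+ P) (p q : CPair G P)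
    (hp : Matches G f p) (hq : Matches G f q) : CPairRel G P p q := by
  have spec1 := transfun_spec f p q hp hq
  have spec2 := transfun_spec f q p hq hp
  have left : ∀ y, transfun q p (transfun p q y) = y := by
    intro y
    obtain ⟨x, rfl, h2⟩ := transfun_rep p q y
    rw [h2, spec2]
  have right : ∀ y, transfun p q (transfun q p y) = y := by
    intro y
    obtain ⟨x, rfl, h2⟩ := transfun_rep q p y
    rw [h2, spec1]
  have hcomm_r : ∀ y, transfun p q (p.T.G.r y) = q.T.G.r (transfun p q y) := by
    intro y
    obtain ⟨x, rfl, h2⟩ := transfun_rep p q y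
    rw [h2, ← p.φ.comm_r, spec1, q.φ.comm_r]
  have hcomm_i : ∀ y, transfun p q (p.T.G.ι y) = q.T.G.ι (transfun p q y) := by
    intro y
    obtain ⟨x, rfl, h2⟩ := transfun_rep p q y
    rw [h2, ← p.φ.comm_i, spec1, q.φ.comm_i]
  have hvertex : ∀ y, p.T.G.r y = y → q.T.G.r (transfun p q y) = transfun p q y := by
    intro y hy
    rw [← hcomm_r, hy]
  have hinj : Function.Injective (transfun p q) := by
    intro a b hab
    rw [← left a, hab, left]
  have hfibers : ∀ y, p.T.G.r y = y →
      G.fiber p.φ.f y = G.fiber q.φ.f (transfun p q y) := by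
    intro y hy
    apply Finset.ext; intro a
    simp only [fiber, Finset.mem_filter, Finset.mem_univ, true_and]
    constructor
    · rintro rfl; exact (spec1 a).symm
    · intro h
      have h2 := congrArg (transfun q p) h
      rw [spec2, left] at h2
      exact h2
  have hweight : ∀ y, p.T.G.r y = y → q.T.G.w (transfun p q y) = p.T.G.w y := by
    intro y hy
    have h1 := p.φ.fiber_genus y hy
    have h2 := q.φ.fiber_genus (transfun p q y) (hvertex y hy)
    rw [← hfibers y hy] at h2
    have h3 : (q.T.G.w (transfun p q y) : ℤ) = (p.T.G.w y : ℤ) := by rw [← h2, ← h1]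
    exact_mod_cast h3
  have hmark : ∀ j, transfun p q (p.T.G.mark j) = q.T.G.mark j := by
    intro j
    rw [← p.φ.mark_comm j, spec1, q.φ.mark_comm]
  have hlen : ∀ y, p.T.G.ι y ≠ y → q.T.len (transfun p q y) = p.T.len y := by
    intro y hy
    obtain ⟨x, rfl, -⟩ := transfun_rep p q y
    have hflagp : p.T.G.r (p.φ.f x) ≠ p.φ.f x := fun h => hy (p.T.G.ι_fix _ h)
    have hιx : G.ι x ≠ x := by
      intro h
      apply hy
      rw [← p.φ.comm_i, h]
    have hflagq : q.T.G.r (q.φ.f x) ≠ q.φ.f x :=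
      fun h => hflagp ((matches_vertex_iff f p q hp hq x).2 h)
    have hlp := hp.2 (G.edgeOf x hιx) x (G.mem_edgeOf x hιx) hflagp
    have hlq := hq.2 (G.edgeOf x hιx) x (G.mem_edgeOf x hιx) hflagq
    rw [spec1, hlq, hlp]
  exact ⟨⟨⟨⟨transfun p q, transfun q p, left, right⟩, hcomm_r, hcomm_i, hweight, hmark⟩,
    hlen⟩, spec1⟩

theorem pair_rigid (p : CPair G P) (u : TIso p.T p.T)
    (hu : ∀ x, u.g.e (p.φ.f x) = p.φ.f x) : ∀ y, u.g.e y = y := by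
  intro y
  by_cases h : p.T.G.r y = y
  · obtain ⟨v, hv, -⟩ := (p.φ.fiber_conn y h).1
    have hv2 : p.φ.f v = y := (Finset.mem_filter.1 hv).2
    rw [← hv2]; exact hu v
  · obtain ⟨x, hx, -⟩ := p.φ.flag_fiber y h
    rw [← hx]; exact hu x

noncomputable def pairHalfLen (p : CPair G P) (x : G.X) : P :=
  if p.T.G.r (p.φ.f x) = p.φ.f x then 0 else p.T.len (p.φ.f x)

theorem pairHalfLen_iota (p : CPair G P) (x : G.X) :
    pairHalfLen p (G.ι x) = pairHalfLen p x := by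
  unfold pairHalfLen
  by_cases h : p.T.G.r (p.φ.f x) = p.φ.f x
  · rw [p.φ.f_i_of_vertex h]
  · have hfl : p.T.G.r (p.T.G.ι (p.φ.f x)) ≠ p.T.G.ι (p.φ.f x) := p.T.G.flag_iota h
    rw [p.φ.comm_i, if_neg hfl, if_neg h, p.T.len_symm]

noncomputable def pairLen (p : CPair G P) (e : G.Edge) : P :=
  pairHalfLen p (G.edge_spec e).choose

theorem pairLen_eq (p : CPair G P) (e : G.Edge) {x : G.X} (hx : x ∈ e.1) :
    pairLen p e = pairHalfLen p x := by
  obtain ⟨hz, hez⟩ := (G.edge_spec e).choose_spec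
  set z := (G.edge_spec e).choose with hzdef
  rw [hez] at hx
  have hx' : x ∈ ({z, G.ι z} : Finset G.X) := hx
  unfold pairLen
  rcases Finset.mem_insert.1 hx' with rfl | h1
  · rfl
  · rw [Finset.mem_singleton.1 h1, pairHalfLen_iota]

noncomputable def pairHom (p : CPair G P) : (G.Edge → ℕ) →+ P where
  toFun := fun v => ∑ e : G.Edge, v e • pairLen p e
  map_zero' := by simp
  map_add' := by
    intro a b
    simp [add_smul, Finset.sum_add_distrib]

theorem pairHom_single (p : CPair G P) (e : G.Edge) :
    pairHom p (Pi.single e 1) = pairLen p e := by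
  show (∑ e' : G.Edge, Pi.single e 1 e' • pairLen p e') = _
  rw [Finset.sum_eq_single e]
  · rw [Pi.single_eq_same, one_smul]
  · intro b _ hb; rw [Pi.single_eq_of_ne hb, zero_smul]
  · intro h; exact absurd (Finset.mem_univ e) h

theorem matches_pairHom (p : CPair G P) : Matches G (pairHom p) p := by
  constructor
  · intro e
    rw [pairHom_single]
    obtain ⟨z, hz, rfl⟩ := G.edge_spec e
    rw [pairLen_eq p _ (G.mem_edgeOf z hz), p.φ.mem_contracted_iff hz]
    unfold pairHalfLen
    by_cases h : p.T.G.r (p.φ.f z) = p.φ.f z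
    · simp [h]
    · rw [if_neg h]
      simp [h, p.T.len_ne _ (flag_iota_ne hz h)]
  · intro e x hx hfl
    rw [pairHom_single, pairLen_eq p e hx]
    unfold pairHalfLen
    rw [if_neg hfl]

theorem pairHom_eq {f : (G.Edge → ℕ) →+ P} (p : CPair G P) (hp : Matches G f p) :
    pairHom p = f := by
  apply AddMonoidHom.functions_ext
  intro e k
  have h1 : (Pi.single e k : G.Edge → ℕ) = k • Pi.single e 1 := by
    funext e'
    by_cases he : e' = e
    · subst he; simp
    · simp [Pi.single_eq_of_ne he]
  rw [h1, map_nsmul, map_nsmul, pairHom_single]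
  congr 1
  by_cases h0 : f (Pi.single e 1) = 0
  · obtain ⟨z, hzmem, hez⟩ := Finset.mem_image.1 ((hp.1 e).2 h0)
    rw [Finset.mem_filter] at hzmem
    have hze : z ∈ e.1 := by rw [← hez]; exact Finset.mem_insert_self _ _
    rw [pairLen_eq p e hze, h0]
    unfold pairHalfLen
    rw [if_pos hzmem.2.2]
  · obtain ⟨z, hz, rfl⟩ := G.edge_spec e
    have hfl : p.T.G.r (p.φ.f z) ≠ p.φ.f z := by
      intro hv
      exact h0 ((hp.1 _).1 ((p.φ.mem_contracted_iff hz).2 hv))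
    rw [pairLen_eq p _ (G.mem_edgeOf z hz)]
    unfold pairHalfLen
    rw [if_neg hfl]
    exact hp.2 _ z (G.mem_edgeOf z hz) hfl

theorem matches_rel {f : (G.Edge → ℕ) →+ P} {p q : CPair G P}
    (hp : Matches G f p) (hrel : CPairRel G P p q) : Matches G f q := by
  obtain ⟨u, hu⟩ := hrel
  have hvert : ∀ x, (p.T.G.r (p.φ.f x) = p.φ.f x) ↔ (q.T.G.r (q.φ.f x) = q.φ.f x) := by
    intro x
    rw [← hu x, ← u.g.comm_r]
    exact ⟨fun h => by rw [h], fun h => u.g.e.injective h⟩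
  constructor
  · intro e
    rw [← hp.1 e]
    obtain ⟨z, hz, rfl⟩ := G.edge_spec e
    rw [p.φ.mem_contracted_iff hz, q.φ.mem_contracted_iff hz]
    exact (hvert z).symm
  · intro e x hx hfl
    have hflp : p.T.G.r (p.φ.f x) ≠ p.φ.f x := fun h => hfl ((hvert x).1 h)
    have hlp := hp.2 e x hx hflp
    obtain ⟨hιx, -⟩ := G.mem_edge hx
    calc q.T.len (q.φ.f x) = q.T.len (u.g.e (p.φ.f x)) := by rw [hu x]
      _ = p.T.len (p.φ.f x) := u.len_eq _ (flag_iota_ne hιx hflp)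
      _ = f (Pi.single e 1) := hlp

theorem matches_construct (hconn : G.Connected) (f : (G.Edge → ℕ) →+ P) :
    Matches G f ⟨G.CTrop f hconn, G.CMor f⟩ :=
  ⟨fun e => G.cmor_contracted f e, fun e x hx hfl => G.cmor_len f e x hx hfl⟩

end Pairs

/-- For a stable connected weighted `n`-marked graph `(G,h,m)` and
a sharp, integral, saturated commutative monoid `P`, the assignment
`f ↦ (Γ_f, φ_{S_f})` is a bijection from the monoid homomorphisms `ℕ^{E(G)} → P`
onto the set of isomorphism classes of pairs `(Γ, φ)` of a tropical curve `Γ` over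
`P` and a morphism `φ : (G,h,m) → 𝔾(Γ)`; the bijection `B` is characterized by
`B f = ⟦(Γ,φ)⟧ ↔ Matches G f (Γ,φ)`.  Moreover each pair is rigid: the only
isomorphism `u : Γ → Γ` with `𝔾(u) ∘ φ = φ` is the identity. -/
theorem hom_pairs_bijection {n : ℕ} (G : WGraph (Fin n))
    (hconn : G.Connected) (hstab : G.Stable)
    {P : Type} [AddCommMonoid P]
    (hsh : Sharp P) (hint : IntegralMonoid P) (hsat : SaturatedMonoid P) :
    ∃ B : ((G.Edge → ℕ) →+ P) ≃ Quot (CPairRel G P),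
      (∀ (f : (G.Edge → ℕ) →+ P) (p : CPair G P),
        B f = Quot.mk _ p ↔ Matches G f p) ∧
      ∀ (p : CPair G P) (u : TIso p.T p.T),
        (∀ x, u.g.e (p.φ.f x) = p.φ.f x) → ∀ y, u.g.e y = y := by
  classical
  have mc : ∀ f : (G.Edge → ℕ) →+ P, Matches G f ⟨G.CTrop f hconn, G.CMor f⟩ :=
    fun f => matches_construct hconn f
  let B0 : ((G.Edge → ℕ) →+ P) → Quot (CPairRel G P) :=
    fun f => Quot.mk _ ⟨G.CTrop f hconn, G.CMor f⟩
  have hres : ∀ (p q : CPair G P), CPairRel G P p q → pairHom p = pairHom q :=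
    fun p q h => (pairHom_eq q (matches_rel (matches_pairHom p) h)).symm
  let Binv : Quot (CPairRel G P) → ((G.Edge → ℕ) →+ P) :=
    Quot.lift (fun p => pairHom p) hres
  have hleft : ∀ f, Binv (B0 f) = f := fun f => pairHom_eq _ (mc f)
  have hright : ∀ qq, B0 (Binv qq) = qq := by
    intro qq
    induction qq using Quot.ind with
    | _ p => exact Quot.sound (matches_cpairrel (pairHom p) _ p (mc _) (matches_pairHom p))
  refine ⟨⟨B0, Binv, hleft, hright⟩, ?_, ?_⟩
  · intro f p
    simp only [Equiv.coe_fn_mk]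
    constructor
    · intro h
      have h2 : f = pairHom p := by
        have h3 := congrArg Binv h
        rw [hleft] at h3
        exact h3
      rw [h2]
      exact matches_pairHom p
    · intro hm
      exact Quot.sound (matches_cpairrel f _ p (mc f) hm)
  · intro p u hu y
    exact pair_rigid p u hu y
end

section
/- Let P be a sharp, integral, saturated commutative monoid, let g, n ≥ 0 satisfy 2g − 2 + n > 0, and let Γ be a stable tropical curve of genus g with n+1 marked legs over P. Then the forgetful construction is well defined and exhaustive: if Γ_* (the result of deleting the flag of l_{n+1}) is not stable, then the vertex v that carried l_{n+1} is the unique unstable vertex of Γ_*, it has weight 0 and valence 2, and its two flags either belong to two distinct edges (case b) or to one edge and one leg (case c); they cannot be the two flags of a single loop, and they cannot both be legs. Moreover, in case (b) the new edge has length d(e_1) + d(e_2) ≠ 0, and in all cases π(Γ) is a stable tropical curve of genus g with n marked legs over P. -/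
section Forget

variable {P : Type} [AddCommMonoid P] {n : ℕ}

/-- The flag of the last marked leg `l_{n+1}` of a tropical curve with `n+1`
marked legs. -/
def lastLeg (T' : Trop P (Fin (n + 1))) : T'.G.X := T'.G.mark (Fin.last n)

/-- The vertex carrying the last marked leg. -/
def baseV (T' : Trop P (Fin (n + 1))) : T'.G.X := T'.G.r (lastLeg T')

/-- The curve `Γ_*` obtained by deleting the last leg is stable, i.e. the vertex
that carried `l_{n+1}` keeps `2h - 2 + val > 0` after losing one flag. -/
def StarStable (T' : Trop P (Fin (n + 1))) : Prop :=
  0 < 2 * (T'.G.w (baseV T') : ℤ) - 2 + ((T'.G.val (baseV T') : ℤ) - 1)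

/-- Case (a) of the forgetful construction: `Γ_*` is stable and `T = Γ_*`;
the inclusion `j` identifies `T` with the complement of the last leg flag,
compatibly with all structure. -/
def CaseA (T' : Trop P (Fin (n + 1))) (T : Trop P (Fin n))
    (j : T.G.X → T'.G.X) : Prop :=
  StarStable T' ∧
  (∀ z, z ≠ lastLeg T' → ∃ x, j x = z) ∧ (∀ x, j x ≠ lastLeg T') ∧
  (∀ x, j (T.G.ι x) = T'.G.ι (j x)) ∧
  (∀ x, T.G.ι x ≠ x → T'.len (j x) = T.len x) ∧
  (∀ k : Fin n, j (T.G.mark k) = T'.G.mark k.castSucc)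

/-- Case (b) of the forgetful construction: `Γ_*` is unstable at the vertex `v`
carrying `l_{n+1}`, whose two remaining flags `f₁, f₂` belong to two distinct edges;
`T` is obtained by deleting `v`, `f₁`, `f₂` and the last leg and joining the two
remaining flags `ι f₁, ι f₂` of those edges into a single edge of length
`len f₁ + len f₂`. -/
def CaseB (T' : Trop P (Fin (n + 1))) (T : Trop P (Fin n))
    (j : T.G.X → T'.G.X) : Prop :=
  ¬ StarStable T' ∧
  ∃ f₁ f₂ : T'.G.X, f₁ ≠ f₂ ∧ T'.G.ι f₁ ≠ f₁ ∧ T'.G.ι f₂ ≠ f₂ ∧ T'.G.ι f₁ ≠ f₂ ∧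
    f₁ ≠ lastLeg T' ∧ f₂ ≠ lastLeg T' ∧
    T'.G.r f₁ = baseV T' ∧ T'.G.r f₂ = baseV T' ∧
    (∀ z, z ≠ lastLeg T' → z ≠ baseV T' → z ≠ f₁ → z ≠ f₂ → ∃ x, j x = z) ∧
    (∀ x, j x ≠ lastLeg T' ∧ j x ≠ baseV T' ∧ j x ≠ f₁ ∧ j x ≠ f₂) ∧
    (∀ x, j x ≠ T'.G.ι f₁ → j x ≠ T'.G.ι f₂ → j (T.G.ι x) = T'.G.ι (j x)) ∧
    (∃ x₁ x₂, j x₁ = T'.G.ι f₁ ∧ j x₂ = T'.G.ι f₂ ∧ T.G.ι x₁ = x₂ ∧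
      T.len x₁ = T'.len f₁ + T'.len f₂) ∧
    (∀ x, T.G.ι x ≠ x → j x ≠ T'.G.ι f₁ → j x ≠ T'.G.ι f₂ →
      T'.len (j x) = T.len x) ∧
    (∀ k : Fin n, j (T.G.mark k) = T'.G.mark k.castSucc)

/-- Case (c) of the forgetful construction: `Γ_*` is unstable at the vertex `v`
carrying `l_{n+1}`, which carries one edge flag `f` and one leg `l_i`
(`i`-th marked leg); `T` is obtained by deleting `v`, `f`, `l_i` and the last leg
and marking the remaining flag `ι f` of the edge with `l_i`. -/
def CaseC (T' : Trop P (Fin (n + 1))) (T : Trop P (Fin n))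
    (j : T.G.X → T'.G.X) : Prop :=
  ¬ StarStable T' ∧
  ∃ (f : T'.G.X) (i : Fin n), T'.G.ι f ≠ f ∧ f ≠ lastLeg T' ∧
    T'.G.mark i.castSucc ≠ lastLeg T' ∧
    T'.G.r f = baseV T' ∧ T'.G.r (T'.G.mark i.castSucc) = baseV T' ∧
    (∀ z, z ≠ lastLeg T' → z ≠ baseV T' → z ≠ f → z ≠ T'.G.mark i.castSucc →
      ∃ x, j x = z) ∧
    (∀ x, j x ≠ lastLeg T' ∧ j x ≠ baseV T' ∧ j x ≠ f ∧
      j x ≠ T'.G.mark i.castSucc) ∧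
    (∀ x, j x ≠ T'.G.ι f → j (T.G.ι x) = T'.G.ι (j x)) ∧
    (∃ x₀, j x₀ = T'.G.ι f ∧ T.G.ι x₀ = x₀ ∧ T.G.mark i = x₀) ∧
    (∀ x, T.G.ι x ≠ x → T'.len (j x) = T.len x) ∧
    (∀ k : Fin n, k ≠ i → j (T.G.mark k) = T'.G.mark k.castSucc)

/-- A realization of the forgetful construction: the datum that `T` is obtained
from `T'` by forgetting the last marked leg and stabilizing (this is the same thing
as an isomorphism `α : π(T') ≅ T`).  It consists of the inclusion `j` of the
underlying set of `T` into that of `T'`, compatible with roots and weights, which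
realizes one of the three cases (a), (b), (c) of the construction. -/
structure ForgetData (T' : Trop P (Fin (n + 1))) (T : Trop P (Fin n)) :
    Type where
  j : T.G.X → T'.G.X
  inj : Function.Injective j
  comm_r : ∀ x, j (T.G.r x) = T'.G.r (j x)
  weight : ∀ x, T.G.r x = x → T'.G.w (j x) = T.G.w x
  cases : CaseA T' T j ∨ CaseB T' T j ∨ CaseC T' T j

end Forget

section Helpers
open Finset

variable {μ : Type}

namespace WGraph

lemma flag_of_moved (G : WGraph μ) {x : G.X} (h : G.ι x ≠ x) : G.r x ≠ x :=
  fun hv => h (G.ι_fix x hv)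

lemma ι_inj (G : WGraph μ) : Function.Injective G.ι :=
  fun a b h => by rw [← G.ι_invol a, h, G.ι_invol]

lemma card_moved (G : WGraph μ) :
    (Finset.univ.filter fun x => G.ι x ≠ x).card = 2 * G.edgeSet.card := by
  classical
  rw [Finset.card_eq_sum_card_fiberwise
    (f := fun x => ({x, G.ι x} : Finset G.X)) (t := G.edgeSet) ?_]
  · rw [Finset.sum_congr rfl (g := fun _ => 2) ?_, Finset.sum_const, smul_eq_mul,
      mul_comm]
    intro e he
    obtain ⟨x, hx, rfl⟩ := Finset.mem_image.1 he
    have hx' : G.ι x ≠ x := (Finset.mem_filter.1 hx).2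
    have : (Finset.univ.filter fun y => G.ι y ≠ y).filter
        (fun y => ({y, G.ι y} : Finset G.X) = {x, G.ι x}) = {x, G.ι x} := by
      ext y
      simp only [Finset.mem_filter, Finset.mem_univ, true_and, Finset.mem_insert,
        Finset.mem_singleton]
      constructor
      · rintro ⟨hy, he⟩
        have : y ∈ ({y, G.ι y} : Finset G.X) := Finset.mem_insert_self _ _
        rw [he] at this
        simpa using this
      · rintro (rfl | rfl)
        · exact ⟨hx', rfl⟩
        · refine ⟨fun h => hx' (G.ι_inj h), ?_⟩
          rw [G.ι_invol, Finset.pair_comm]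
    rw [this, Finset.card_pair (fun h => hx' h.symm)]
  · intro x hx
    exact Finset.mem_image.2 ⟨x, hx, rfl⟩

lemma reach_eq (G : WGraph μ) (v : G.X)
    (hclosed : ∀ f, G.r f ≠ f → G.r (G.ι f) = v → G.r f = v) :
    ∀ u c, Relation.ReflTransGen (G.subAdj Finset.univ) u c → c = v → u = v := by
  intro u c h
  induction h with
  | refl => exact fun h => h
  | tail _ step ih =>
    rintro rfl
    obtain ⟨f, -, hf1, hf2, hf3⟩ := step
    exact ih (hf2 ▸ hclosed f hf1 hf3)

lemma vertex_unique (G : WGraph μ) (hconn : G.Connected) (v : G.X) (hv : G.r v = v)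
    (hclosed : ∀ f, G.r f ≠ f → G.r (G.ι f) = v → G.r f = v) :
    ∀ u, G.r u = u → u = v := by
  intro u hu
  exact G.reach_eq v hclosed u v
    (hconn.2 u (Finset.mem_univ u) v (Finset.mem_univ v) hu hv) rfl

/-- Number of legs equals the cardinality of the marking type. -/
lemma card_legs {m : ℕ} (G : WGraph (Fin m)) :
    (Finset.univ.filter fun x => G.r x ≠ x ∧ G.ι x = x).card = m := by
  classical
  have : (Finset.univ : Finset (Fin m)).card =
      (Finset.univ.filter fun x => G.r x ≠ x ∧ G.ι x = x).card := by
    apply Finset.card_bij (fun j _ => G.mark j)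
    · intro j _
      exact Finset.mem_filter.2 ⟨Finset.mem_univ _, G.mark_flag j, G.mark_leg j⟩
    · intro a _ b _ h
      exact G.mark_inj h
    · intro x hx
      obtain ⟨-, h1, h2⟩ := Finset.mem_filter.1 hx
      obtain ⟨j, hj⟩ := G.mark_surj x h1 h2
      exact ⟨j, Finset.mem_univ _, hj⟩
  simpa using this.symm

end WGraph

lemma rtg_lift {α β : Type*} {R : α → α → Prop} {S : β → β → Prop} (p : α → β)
    (h : ∀ a b, R a b → Relation.ReflTransGen S (p a) (p b)) :
    ∀ u v, Relation.ReflTransGen R u v → Relation.ReflTransGen S (p u) (p v) := by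
  intro u v huv
  induction huv with
  | refl => exact Relation.ReflTransGen.refl
  | tail _ step ih => exact ih.trans (h _ _ step)

lemma subtype_filter_sum {α : Type} [Fintype α] [DecidableEq α] {M : Type*}
    [AddCommMonoid M] (q : α → Prop) [DecidablePred q]
    (p : {x // q x} → Prop) [DecidablePred p] (p' : α → Prop) [DecidablePred p']
    (h : ∀ x : {x // q x}, p x ↔ p' x.val) (h' : ∀ x, p' x → q x) (f : α → M) :
    ∑ x ∈ Finset.univ.filter p, f x.val = ∑ x ∈ Finset.univ.filter p', f x := by
  classical
  apply Finset.sum_bij (fun x _ => x.val)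
  · intro a ha
    exact Finset.mem_filter.2 ⟨Finset.mem_univ _,
      (h a).1 (Finset.mem_filter.1 ha).2⟩
  · intro a _ b _ hab
    exact Subtype.ext hab
  · intro b hb
    have hb' := (Finset.mem_filter.1 hb).2
    exact ⟨⟨b, h' b hb'⟩, Finset.mem_filter.2 ⟨Finset.mem_univ _, (h _).2 hb'⟩, rfl⟩
  · intro a _
    rfl

lemma subtype_filter_card {α : Type} [Fintype α] [DecidableEq α] (q : α → Prop)
    [DecidablePred q]
    (p : {x // q x} → Prop) [DecidablePred p] (p' : α → Prop) [DecidablePred p']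
    (h : ∀ x : {x // q x}, p x ↔ p' x.val) (h' : ∀ x, p' x → q x) :
    (Finset.univ.filter p).card = (Finset.univ.filter p').card := by
  classical
  rw [Finset.card_eq_sum_ones, Finset.card_eq_sum_ones]
  exact subtype_filter_sum q p p' h h' (fun _ => 1)

end Helpers

lemma degenerate_genus {m : ℕ} (G : WGraph (Fin m)) (hconn : G.Connected)
    (v : G.X) (hv : G.r v = v)
    (hclosed : ∀ f, G.r f ≠ f → G.r (G.ι f) = v → G.r f = v) :
    (∀ x, G.r x ≠ x → G.r x = v) ∧
      G.genus = (G.edgeSet.card : ℤ) + (G.w v : ℤ) := by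
  have huniq := G.vertex_unique hconn v hv hclosed
  have hflag : ∀ x, G.r x ≠ x → G.r x = v := fun x _ => huniq (G.r x) (G.r_idem x)
  refine ⟨hflag, ?_⟩
  have hV : Finset.univ.filter (fun x => G.r x = x) = {v} := by
    ext x
    simp only [Finset.mem_filter, Finset.mem_univ, true_and, Finset.mem_singleton]
    exact ⟨fun h => huniq x h, fun h => h ▸ hv⟩
  show G.subB1 Finset.univ + _ = _
  unfold WGraph.subB1
  rw [hV]
  show (G.edgeSet.card : ℤ) - _ + 1 + _ = _
  simp only [Finset.card_singleton, Finset.sum_singleton, Nat.cast_one]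
  ring

/-- If a flag `f` has `r (ι f) = v` then `ι f` is itself a flag (rooted at `v`),
provided `v` is a vertex. -/
lemma iota_flag {μ : Type} (G : WGraph μ) {v f : G.X} (hv : G.r v = v)
    (hf : G.r f ≠ f) (hrf : G.r (G.ι f) = v) : G.r (G.ι f) ≠ G.ι f := by
  intro h
  have h1 : G.ι f = v := h ▸ hrf
  have : f = v := by rw [← G.ι_invol f, h1, G.ι_fix v hv]
  exact hf (by rw [this, hv])

section Structure

variable {P : Type} [AddCommMonoid P] {n : ℕ} {g : ℤ}

lemma structure_lemma (hsh : Sharp P) (hgn : 0 < 2 * g - 2 + (n : ℤ))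
    (T' : Trop P (Fin (n + 1))) (hstab : T'.G.Stable) (hgen : T'.G.genus = g)
    (hS : ¬ StarStable T') :
    T'.G.w (baseV T') = 0 ∧ T'.G.val (baseV T') = 3 ∧
      (∀ x, T'.G.IsVertex x → x ≠ baseV T' →
        0 < 2 * (T'.G.w x : ℤ) - 2 + (T'.G.val x : ℤ)) ∧
      ∃ f₁ f₂ : T'.G.X, f₁ ≠ f₂ ∧ f₁ ≠ lastLeg T' ∧ f₂ ≠ lastLeg T' ∧
        T'.G.r f₁ ≠ f₁ ∧ T'.G.r f₂ ≠ f₂ ∧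
        T'.G.r f₁ = baseV T' ∧ T'.G.r f₂ = baseV T' ∧
        (∀ x, T'.G.r x ≠ x → T'.G.r x = baseV T' →
          x = lastLeg T' ∨ x = f₁ ∨ x = f₂) ∧
        T'.G.ι f₁ ≠ f₂ ∧
        ¬ (T'.G.ι f₁ = f₁ ∧ T'.G.ι f₂ = f₂) ∧
        ((T'.G.ι f₁ ≠ f₁ ∧ T'.G.ι f₂ ≠ f₂ ∧ T'.len f₁ + T'.len f₂ ≠ 0) ∨
          (T'.G.ι f₁ ≠ f₁ ∧ T'.G.ι f₂ = f₂) ∨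
          (T'.G.ι f₁ = f₁ ∧ T'.G.ι f₂ ≠ f₂)) := by
  classical
  set G := T'.G with hG
  set L := lastLeg T' with hL
  set v := baseV T' with hv0
  have hrL : G.r L = v := rfl
  have hLflag : G.r L ≠ L := G.mark_flag _
  have hLleg : G.ι L = L := G.mark_leg _
  have hvv : G.r v = v := G.r_idem L
  have hLv : L ≠ v := fun h => hLflag (by rw [← h] at hvv; rw [hvv])
  -- the set of flags at v
  set S : Finset G.X := Finset.univ.filter (fun x => G.r x ≠ x ∧ G.r x = v) with hSdef
  have hcardS : S.card = G.val v := rfl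
  have hLS : L ∈ S := Finset.mem_filter.2 ⟨Finset.mem_univ _, hLflag, hrL⟩
  have hstabv := hstab v hvv
  have hS0 : 2 * (T'.G.w (baseV T') : ℤ) + (T'.G.val (baseV T') : ℤ) ≤ 3 := by
    unfold StarStable at hS
    omega
  have hS' : 2 * (G.w v : ℤ) + (G.val v : ℤ) ≤ 3 := hS0
  have hval1 : 1 ≤ G.val v := by
    rw [← hcardS]
    exact Finset.card_pos.2 ⟨L, hLS⟩
  -- rule out (w, val) = (1, 1)
  have hw1 : ¬ (G.w v = 1 ∧ G.val v = 1) := by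
    rintro ⟨hw, hval⟩
    have hSL : S = {L} := by
      obtain ⟨a, ha⟩ := Finset.card_eq_one.1 (by rw [hcardS, hval])
      rw [ha] at hLS ⊢
      rw [Finset.mem_singleton.1 hLS]
    have hclosed : ∀ f, G.r f ≠ f → G.r (G.ι f) = v → G.r f = v := by
      intro f hf hrf
      have hif : G.ι f ∈ S := Finset.mem_filter.2
        ⟨Finset.mem_univ _, iota_flag G hvv hf hrf, hrf⟩
      rw [hSL, Finset.mem_singleton] at hif
      have : f = L := by rw [← G.ι_invol f, hif, hLleg]
      rw [this]; exact hrL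
    obtain ⟨hflag, hgenus⟩ := degenerate_genus G T'.conn v hvv hclosed
    -- no moved flags
    have hmoved : Finset.univ.filter (fun x => G.ι x ≠ x) = ∅ := by
      ext x
      simp only [Finset.mem_filter, Finset.mem_univ, true_and,
        Finset.notMem_empty, iff_false]
      intro hx
      have hxS : x ∈ S := Finset.mem_filter.2
        ⟨Finset.mem_univ _, G.flag_of_moved hx, hflag x (G.flag_of_moved hx)⟩
      rw [hSL, Finset.mem_singleton] at hxS
      exact hx (hxS ▸ hLleg)
    have hE : G.edgeSet.card = 0 := by
      have := G.card_moved
      rw [hmoved] at this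
      simpa using this.symm
    -- legs
    have hlegs : Finset.univ.filter (fun x => G.r x ≠ x ∧ G.ι x = x) = {L} := by
      ext x
      simp only [Finset.mem_filter, Finset.mem_univ, true_and, Finset.mem_singleton]
      constructor
      · rintro ⟨h1, h2⟩
        have : x ∈ S := Finset.mem_filter.2 ⟨Finset.mem_univ _, h1, hflag x h1⟩
        rwa [hSL, Finset.mem_singleton] at this
      · rintro rfl; exact ⟨hLflag, hLleg⟩
    have hn : n + 1 = 1 := by
      have := G.card_legs
      rw [hlegs] at this
      simpa using this.symm
    have hg : g = 1 := by
      rw [← hgen, hgenus, hE, hw]; norm_num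
    omega
  have hwval : G.w v = 0 ∧ G.val v = 3 := by
    constructor <;> omega
  obtain ⟨hw0, hval3⟩ := hwval
  -- extract the two other flags
  have hcard2 : (S.erase L).card = 2 := by
    rw [Finset.card_erase_of_mem hLS, hcardS, hval3]
  obtain ⟨f₁, f₂, hf12, hSe⟩ := Finset.card_eq_two.1 hcard2
  have hf₁ : f₁ ∈ S.erase L := by rw [hSe]; simp
  have hf₂ : f₂ ∈ S.erase L := by rw [hSe]; simp
  have hf₁L : f₁ ≠ L := (Finset.mem_erase.1 hf₁).1
  have hf₂L : f₂ ≠ L := (Finset.mem_erase.1 hf₂).1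
  have hf₁S := Finset.mem_filter.1 (Finset.mem_of_mem_erase hf₁)
  have hf₂S := Finset.mem_filter.1 (Finset.mem_of_mem_erase hf₂)
  have honly : ∀ x, G.r x ≠ x → G.r x = v → x = L ∨ x = f₁ ∨ x = f₂ := by
    intro x h1 h2
    have hx : x ∈ S := Finset.mem_filter.2 ⟨Finset.mem_univ _, h1, h2⟩
    rcases eq_or_ne x L with h | h
    · exact Or.inl h
    · have : x ∈ S.erase L := Finset.mem_erase.2 ⟨h, hx⟩
      rw [hSe] at this
      simp only [Finset.mem_insert, Finset.mem_singleton] at this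
      exact Or.inr this
  -- common degenerate contradiction machinery
  have hdegen : ∀ (hcl : ∀ f, G.r f ≠ f → G.r (G.ι f) = v → G.r f = v),
      (∀ x, G.r x ≠ x → G.r x = v) ∧
        G.genus = (G.edgeSet.card : ℤ) + (G.w v : ℤ) :=
    fun hcl => degenerate_genus G T'.conn v hvv hcl
  -- not a loop
  have hnoloop : G.ι f₁ ≠ f₂ := by
    intro hloop
    have hloop' : G.ι f₂ = f₁ := by rw [← hloop, G.ι_invol]
    have hm1 : G.ι f₁ ≠ f₁ := fun h => hf12 (by rw [← hloop, h])
    have hm2 : G.ι f₂ ≠ f₂ := fun h => hf12 (hloop'.symm.trans h)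
    have hclosed : ∀ f, G.r f ≠ f → G.r (G.ι f) = v → G.r f = v := by
      intro f hf hrf
      rcases honly (G.ι f) (iota_flag G hvv hf hrf) hrf with h | h | h
      · have : f = L := by rw [← G.ι_invol f, h, hLleg]
        rw [this]; exact hrL
      · have : f = f₂ := by rw [← G.ι_invol f, h, hloop]
        rw [this]; exact hf₂S.2.2
      · have : f = f₁ := by rw [← G.ι_invol f, h, hloop']
        rw [this]; exact hf₁S.2.2
    obtain ⟨hflag, hgenus⟩ := hdegen hclosed
    have hmoved : Finset.univ.filter (fun x => G.ι x ≠ x) = {f₁, f₂} := by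
      ext x
      simp only [Finset.mem_filter, Finset.mem_univ, true_and, Finset.mem_insert,
        Finset.mem_singleton]
      constructor
      · intro hx
        rcases honly x (G.flag_of_moved hx) (hflag x (G.flag_of_moved hx)) with
          h | h | h
        · exact absurd (h ▸ hLleg) hx
        · exact Or.inl h
        · exact Or.inr h
      · rintro (rfl | rfl)
        · exact hm1
        · exact hm2
    have hE : G.edgeSet.card = 1 := by
      have h2 := G.card_moved
      rw [hmoved, Finset.card_pair hf12] at h2
      omega
    have hlegs : Finset.univ.filter (fun x => G.r x ≠ x ∧ G.ι x = x) = {L} := by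
      ext x
      simp only [Finset.mem_filter, Finset.mem_univ, true_and, Finset.mem_singleton]
      constructor
      · rintro ⟨h1, h2⟩
        rcases honly x h1 (hflag x h1) with h | h | h
        · exact h
        · exact absurd (h ▸ h2) (h ▸ hm1)
        · exact absurd (h ▸ h2) (h ▸ hm2)
      · rintro rfl; exact ⟨hLflag, hLleg⟩
    have hn : n + 1 = 1 := by
      have := G.card_legs
      rw [hlegs] at this
      simpa using this.symm
    have hg : g = 1 := by
      rw [← hgen, hgenus, hE, hw0]; norm_num
    omega
  -- not both legs
  have hnotboth : ¬ (G.ι f₁ = f₁ ∧ G.ι f₂ = f₂) := by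
    rintro ⟨hl1, hl2⟩
    have hclosed : ∀ f, G.r f ≠ f → G.r (G.ι f) = v → G.r f = v := by
      intro f hf hrf
      rcases honly (G.ι f) (iota_flag G hvv hf hrf) hrf with h | h | h
      · have : f = L := by rw [← G.ι_invol f, h, hLleg]
        rw [this]; exact hrL
      · have : f = f₁ := by rw [← G.ι_invol f, h, hl1]
        rw [this]; exact hf₁S.2.2
      · have : f = f₂ := by rw [← G.ι_invol f, h, hl2]
        rw [this]; exact hf₂S.2.2
    obtain ⟨hflag, hgenus⟩ := hdegen hclosed
    have hmoved : Finset.univ.filter (fun x => G.ι x ≠ x) = ∅ := by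
      ext x
      simp only [Finset.mem_filter, Finset.mem_univ, true_and,
        Finset.notMem_empty, iff_false]
      intro hx
      rcases honly x (G.flag_of_moved hx) (hflag x (G.flag_of_moved hx)) with
        h | h | h
      · exact hx (h ▸ hLleg)
      · exact hx (h ▸ hl1)
      · exact hx (h ▸ hl2)
    have hE : G.edgeSet.card = 0 := by
      have := G.card_moved
      rw [hmoved] at this
      simpa using this.symm
    have hlegs : Finset.univ.filter (fun x => G.r x ≠ x ∧ G.ι x = x) = {L, f₁, f₂} := by
      ext x
      simp only [Finset.mem_filter, Finset.mem_univ, true_and, Finset.mem_insert,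
        Finset.mem_singleton]
      constructor
      · rintro ⟨h1, h2⟩
        exact honly x h1 (hflag x h1)
      · rintro (rfl | rfl | rfl)
        · exact ⟨hLflag, hLleg⟩
        · exact ⟨hf₁S.2.1, hl1⟩
        · exact ⟨hf₂S.2.1, hl2⟩
    have hn : n + 1 = 3 := by
      have := G.card_legs
      rw [hlegs] at this
      rw [Finset.card_insert_of_notMem (by simp [hf₁L.symm, hf₂L.symm]),
        Finset.card_pair hf12] at this
      omega
    have hg : g = 0 := by
      rw [← hgen, hgenus, hE, hw0]; norm_num
    omega
  refine ⟨hw0, hval3, fun x hx _ => hstab x hx, f₁, f₂, hf12, hf₁L, hf₂L,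
    hf₁S.2.1, hf₂S.2.1, hf₁S.2.2, hf₂S.2.2, honly, hnoloop, hnotboth, ?_⟩
  by_cases hm1 : G.ι f₁ = f₁
  · by_cases hm2 : G.ι f₂ = f₂
    · exact absurd ⟨hm1, hm2⟩ hnotboth
    · exact Or.inr (Or.inr ⟨hm1, hm2⟩)
  · by_cases hm2 : G.ι f₂ = f₂
    · exact Or.inr (Or.inl ⟨hm1, hm2⟩)
    · refine Or.inl ⟨hm1, hm2, fun h0 => ?_⟩
      exact T'.len_ne f₁ hm1 (hsh _ _ h0)

end Structure

section CaseAProof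

variable {P : Type} [AddCommMonoid P] {n : ℕ} {g : ℤ}

lemma caseA_exists (T' : Trop P (Fin (n + 1))) (hstab : T'.G.Stable)
    (hgen : T'.G.genus = g) (hS : StarStable T') :
    ∃ T : Trop P (Fin n), T.G.Stable ∧ T.G.genus = g ∧
      Nonempty (ForgetData T' T) := by
  classical
  have hLflag : T'.G.r (lastLeg T') ≠ lastLeg T' := T'.G.mark_flag _
  have hLleg : T'.G.ι (lastLeg T') = lastLeg T' := T'.G.mark_leg _
  have hvv : T'.G.r (baseV T') = baseV T' := T'.G.r_idem _
  have hrL : T'.G.r (lastLeg T') = baseV T' := rfl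
  have hvL : baseV T' ≠ lastLeg T' := fun h => hLflag (by rw [← h, hvv])
  have hkr : ∀ x : T'.G.X, T'.G.r x ≠ lastLeg T' := by
    intro x h
    exact hLflag (by rw [← h, T'.G.r_idem])
  have hki : ∀ x : T'.G.X, x ≠ lastLeg T' → T'.G.ι x ≠ lastLeg T' := by
    intro x hx h
    exact hx (by rw [← T'.G.ι_invol x, h, hLleg])
  have hkm : ∀ k : Fin n, T'.G.mark k.castSucc ≠ lastLeg T' := by
    intro k h
    exact (Fin.castSucc_lt_last k).ne (T'.G.mark_inj h)
  set GT : WGraph (Fin n) :=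
    { X := {x : T'.G.X // x ≠ lastLeg T'}
      fin := inferInstance
      deq := inferInstance
      r := fun x => ⟨T'.G.r x.val, hkr x.val⟩
      ι := fun x => ⟨T'.G.ι x.val, hki x.val x.2⟩
      r_idem := fun x => Subtype.ext (T'.G.r_idem x.val)
      ι_invol := fun x => Subtype.ext (T'.G.ι_invol x.val)
      ι_fix := fun x h => Subtype.ext (T'.G.ι_fix x.val (congrArg Subtype.val h))
      w := fun x => T'.G.w x.val
      mark := fun k => ⟨T'.G.mark k.castSucc, hkm k⟩
      mark_flag := fun k h => T'.G.mark_flag k.castSucc (congrArg Subtype.val h)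
      mark_leg := fun k => Subtype.ext (T'.G.mark_leg k.castSucc)
      mark_inj := fun a b h =>
        Fin.castSucc_injective n (T'.G.mark_inj (congrArg Subtype.val h))
      mark_surj := by
        intro x h1 h2
        obtain ⟨j, hj⟩ := T'.G.mark_surj x.val
          (fun h => h1 (Subtype.ext h)) (congrArg Subtype.val h2)
        obtain ⟨k, hk⟩ := (Fin.exists_castSucc_eq (i := j)).2
          (fun h => x.2 (by rw [← hj, h]; rfl))
        exact ⟨k, Subtype.ext (show T'.G.mark k.castSucc = x.val by
          rw [hk, hj])⟩ } with hGT
  have hconn : GT.Connected := by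
    constructor
    · exact ⟨⟨baseV T', hvL⟩, Finset.mem_univ _, Subtype.ext hvv⟩
    · intro a _ b _ ha hb
      set p : T'.G.X → GT.X :=
        fun x => if h : x = lastLeg T' then ⟨baseV T', hvL⟩ else ⟨x, h⟩ with hp
      have hpv : ∀ (x : T'.G.X) (hx : x ≠ lastLeg T'), p x = ⟨x, hx⟩ := by
        intro x hx
        simp [hp, hx]
      have hstep : ∀ u w, T'.G.subAdj Finset.univ u w →
          Relation.ReflTransGen (GT.subAdj Finset.univ) (p u) (p w) := by
        rintro u w ⟨f, -, hf1, rfl, rfl⟩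
        by_cases hfL : f = lastLeg T'
        · subst hfL
          rw [hLleg]
        · apply Relation.ReflTransGen.single
          refine ⟨⟨f, hfL⟩, Finset.mem_univ _,
            fun h => hf1 (congrArg Subtype.val h), ?_, ?_⟩
          · rw [hpv (T'.G.r f) (hkr f)]
          · rw [hpv (T'.G.r (T'.G.ι f)) (hkr _)]
      have := rtg_lift p hstep a.val b.val
        (T'.conn.2 a.val (Finset.mem_univ _) b.val (Finset.mem_univ _)
          (congrArg Subtype.val ha) (congrArg Subtype.val hb))
      rwa [hpv a.val a.2, hpv b.val b.2, Subtype.coe_eta, Subtype.coe_eta] at this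
  set T : Trop P (Fin n) :=
    { G := GT
      conn := hconn
      len := fun x => T'.len x.val
      len_symm := fun x => T'.len_symm x.val
      len_ne := fun x h => T'.len_ne x.val (fun h' => h (Subtype.ext h')) } with hT
  have hmoved : (Finset.univ.filter fun x : GT.X => GT.ι x ≠ x).card =
      (Finset.univ.filter fun x : T'.G.X => T'.G.ι x ≠ x).card := by
    apply subtype_filter_card
    · intro x
      rw [not_iff_not]
      exact ⟨fun h => congrArg Subtype.val h, fun h => Subtype.ext h⟩
    · intro x hx h
      exact hx (h ▸ hLleg)
  have hvert : (Finset.univ.filter fun x : GT.X => GT.r x = x).card =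
      (Finset.univ.filter fun x : T'.G.X => T'.G.r x = x).card := by
    apply subtype_filter_card
    · intro x
      exact ⟨fun h => congrArg Subtype.val h, fun h => Subtype.ext h⟩
    · intro x hx h
      exact hLflag (h ▸ hx)
  have hsum : (∑ x ∈ Finset.univ.filter fun x : GT.X => GT.r x = x,
      (T'.G.w x.val : ℤ)) =
      ∑ x ∈ Finset.univ.filter fun x : T'.G.X => T'.G.r x = x, (T'.G.w x : ℤ) := by
    refine subtype_filter_sum _ _ _ ?_ ?_ (fun a => (T'.G.w a : ℤ))
    · intro x
      exact ⟨fun h => congrArg Subtype.val h, fun h => Subtype.ext h⟩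
    · intro x hx h
      exact hLflag (h ▸ hx)
  have hE : GT.edgeSet.card = T'.G.edgeSet.card := by
    have e1 := GT.card_moved
    have e2 := T'.G.card_moved
    omega
  have hgenus : GT.genus = g := by
    rw [← hgen]
    show GT.subB1 _ + _ = T'.G.subB1 _ + _
    unfold WGraph.subB1
    show (GT.edgeSet.card : ℤ) - _ + 1 + _ = (T'.G.edgeSet.card : ℤ) - _ + 1 + _
    rw [hE, hvert, hsum]
  have hstabT : GT.Stable := by
    intro x hx
    have hxval : T'.G.r x.val = x.val := congrArg Subtype.val hx
    by_cases hxv : x.val = baseV T'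
    · -- the base vertex: valence drops by one, StarStable gives stability
      have hLmem : lastLeg T' ∈ Finset.univ.filter
          (fun y => T'.G.r y ≠ y ∧ T'.G.r y = baseV T') :=
        Finset.mem_filter.2 ⟨Finset.mem_univ _, hLflag, hrL⟩
      have hval : GT.val x = T'.G.val (baseV T') - 1 := by
        have h1 : GT.val x = (Finset.univ.filter
            (fun y => (T'.G.r y ≠ y ∧ T'.G.r y = baseV T') ∧
              y ≠ lastLeg T')).card := by
          apply subtype_filter_card
          · intro y
            constructor
            · rintro ⟨h1, h2⟩
              refine ⟨⟨fun h => h1 (Subtype.ext h), ?_⟩, y.2⟩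
              rw [← hxv]
              exact congrArg Subtype.val h2
            · rintro ⟨⟨h1, h2⟩, h3⟩
              exact ⟨fun h => h1 (congrArg Subtype.val h),
                Subtype.ext (show T'.G.r y.val = x.val by rw [h2, hxv])⟩
          · intro y hy
            exact hy.2
        have h2 : Finset.univ.filter
            (fun y => (T'.G.r y ≠ y ∧ T'.G.r y = baseV T') ∧ y ≠ lastLeg T') =
            (Finset.univ.filter
              (fun y => T'.G.r y ≠ y ∧ T'.G.r y = baseV T')).erase (lastLeg T') := by
          ext y
          simp only [Finset.mem_filter, Finset.mem_univ, true_and,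
            Finset.mem_erase]
          tauto
        rw [h1, h2, Finset.card_erase_of_mem hLmem]
        rfl
      have hval1 : 1 ≤ T'.G.val (baseV T') :=
        Finset.card_pos.2 ⟨lastLeg T', hLmem⟩
      have hwx : GT.w x = T'.G.w (baseV T') := by
        show T'.G.w x.val = _
        rw [hxv]
      unfold StarStable at hS
      rw [hval, hwx]
      push_cast [Nat.cast_sub hval1]
      omega
    · have hval : GT.val x = T'.G.val x.val := by
        apply subtype_filter_card
        · intro y
          constructor
          · rintro ⟨h1, h2⟩
            exact ⟨fun h => h1 (Subtype.ext h), congrArg Subtype.val h2⟩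
          · rintro ⟨h1, h2⟩
            exact ⟨fun h => h1 (congrArg Subtype.val h), Subtype.ext h2⟩
        · intro y hy h
          exact hxv (by rw [← hy.2, h, hrL])
      have hwx : GT.w x = T'.G.w x.val := rfl
      rw [hval, hwx]
      exact hstab x.val hxval
  refine ⟨T, hstabT, hgenus, ⟨⟨Subtype.val, Subtype.val_injective,
    fun x => rfl, fun x _ => rfl, Or.inl ?_⟩⟩⟩
  refine ⟨hS, fun z hz => ⟨⟨z, hz⟩, rfl⟩, fun x => x.2, fun x => rfl,
    fun x _ => rfl, fun k => rfl⟩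

end CaseAProof

section CaseBProof

variable {P : Type} [AddCommMonoid P] {n : ℕ} {g : ℤ}

lemma caseB_exists (hsh : Sharp P)
    (T' : Trop P (Fin (n + 1))) (hstab : T'.G.Stable) (hgen : T'.G.genus = g)
    (hS : ¬ StarStable T') (f₁ f₂ : T'.G.X) (hf12 : f₁ ≠ f₂)
    (h1L : f₁ ≠ lastLeg T') (h2L : f₂ ≠ lastLeg T')
    (hr1 : T'.G.r f₁ = baseV T') (hr2 : T'.G.r f₂ = baseV T')
    (honly : ∀ x, T'.G.r x ≠ x → T'.G.r x = baseV T' →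
      x = lastLeg T' ∨ x = f₁ ∨ x = f₂)
    (hm1 : T'.G.ι f₁ ≠ f₁) (hm2 : T'.G.ι f₂ ≠ f₂) (hnl : T'.G.ι f₁ ≠ f₂)
    (hw0 : T'.G.w (baseV T') = 0) :
    ∃ T : Trop P (Fin n), T.G.Stable ∧ T.G.genus = g ∧
      Nonempty (ForgetData T' T) := by
  classical
  have hLflag : T'.G.r (lastLeg T') ≠ lastLeg T' := T'.G.mark_flag _
  have hLleg : T'.G.ι (lastLeg T') = lastLeg T' := T'.G.mark_leg _
  have hvv : T'.G.r (baseV T') = baseV T' := T'.G.r_idem _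
  have hrL : T'.G.r (lastLeg T') = baseV T' := rfl
  have hfl1 : T'.G.r f₁ ≠ f₁ := T'.G.flag_of_moved hm1
  have hfl2 : T'.G.r f₂ ≠ f₂ := T'.G.flag_of_moved hm2
  have hιv : T'.G.ι (baseV T') = baseV T' := T'.G.ι_fix _ hvv
  have hnl' : T'.G.ι f₂ ≠ f₁ := fun h => hnl (by rw [← h, T'.G.ι_invol])
  have hii : T'.G.ι f₁ ≠ T'.G.ι f₂ := fun h => hf12 (T'.G.ι_inj h)
  -- keep predicate
  set keep : T'.G.X → Prop := fun x =>
    x ≠ lastLeg T' ∧ x ≠ baseV T' ∧ x ≠ f₁ ∧ x ≠ f₂ with hkeep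
  have hkiota : ∀ x, x ≠ lastLeg T' → x ≠ baseV T' →
      T'.G.ι x ≠ lastLeg T' ∧ T'.G.ι x ≠ baseV T' := by
    intro x h1 h2
    constructor
    · intro h; exact h1 (by rw [← T'.G.ι_invol x, h, hLleg])
    · intro h; exact h2 (by rw [← T'.G.ι_invol x, h, hιv])
  have h1v : f₁ ≠ baseV T' := fun h => hfl1 (by rw [h, hvv])
  have h2v : f₂ ≠ baseV T' := fun h => hfl2 (by rw [h, hvv])
  have hg₁ : keep (T'.G.ι f₁) :=
    ⟨(hkiota f₁ h1L h1v).1, (hkiota f₁ h1L h1v).2, hm1, hnl⟩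
  have hg₂ : keep (T'.G.ι f₂) :=
    ⟨(hkiota f₂ h2L h2v).1, (hkiota f₂ h2L h2v).2, hnl', hm2⟩
  have hflagv : ∀ x, T'.G.r x ≠ x → x ≠ baseV T' := by
    intro x hx h
    exact hx (by rw [h, hvv])
  have hvertkeep : ∀ u, T'.G.r u = u → u ≠ baseV T' → keep u := by
    intro u hu huv
    refine ⟨fun h => hLflag (h ▸ hu), huv, fun h => hfl1 (h ▸ hu),
      fun h => hfl2 (h ▸ hu)⟩
  have hrkeep : ∀ x, keep x → keep (T'.G.r x) := by
    intro x hx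
    rcases eq_or_ne (T'.G.r x) x with h | h
    · rwa [h]
    · refine hvertkeep _ (T'.G.r_idem x) ?_
      intro hrv
      rcases honly x h hrv with h' | h' | h'
      · exact hx.1 h'
      · exact hx.2.2.1 h'
      · exact hx.2.2.2 h'
  have hikeep : ∀ x, keep x → x ≠ T'.G.ι f₁ → x ≠ T'.G.ι f₂ →
      keep (T'.G.ι x) := by
    intro x hx hx1 hx2
    refine ⟨(hkiota x hx.1 hx.2.1).1, (hkiota x hx.1 hx.2.1).2, ?_, ?_⟩
    · intro h; exact hx1 (by rw [← T'.G.ι_invol x, h])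
    · intro h; exact hx2 (by rw [← T'.G.ι_invol x, h])
  have hmoved1 : T'.G.ι (T'.G.ι f₁) ≠ T'.G.ι f₁ := by
    rw [T'.G.ι_invol]; exact fun h => hm1 h.symm
  have hmoved2 : T'.G.ι (T'.G.ι f₂) ≠ T'.G.ι f₂ := by
    rw [T'.G.ι_invol]; exact fun h => hm2 h.symm
  have hg₁flag : T'.G.r (T'.G.ι f₁) ≠ T'.G.ι f₁ := T'.G.flag_of_moved hmoved1
  have hg₂flag : T'.G.r (T'.G.ι f₂) ≠ T'.G.ι f₂ := T'.G.flag_of_moved hmoved2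
  have hrg₁ : T'.G.r (T'.G.ι f₁) ≠ baseV T' := by
    intro h
    rcases honly _ hg₁flag h with h' | h' | h'
    · exact hg₁.1 h'
    · exact hm1 h'
    · exact hnl h'
  have hrg₂ : T'.G.r (T'.G.ι f₂) ≠ baseV T' := by
    intro h
    rcases honly _ hg₂flag h with h' | h' | h'
    · exact hg₂.1 h'
    · exact hnl' h'
    · exact hm2 h'
  -- the glued involution
  set ιB : T'.G.X → T'.G.X := fun x =>
    if x = T'.G.ι f₁ then T'.G.ι f₂ else
      if x = T'.G.ι f₂ then T'.G.ι f₁ else T'.G.ι x with hιB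
  have hιB1 : ιB (T'.G.ι f₁) = T'.G.ι f₂ := by simp [hιB]
  have hιB2 : ιB (T'.G.ι f₂) = T'.G.ι f₁ := by simp [hιB, hii.symm]
  have hιBgen : ∀ x, x ≠ T'.G.ι f₁ → x ≠ T'.G.ι f₂ → ιB x = T'.G.ι x := by
    intro x h1 h2
    simp [hιB, h1, h2]
  have hkeepB : ∀ x, keep x → keep (ιB x) := by
    intro x hx
    rcases eq_or_ne x (T'.G.ι f₁) with h | h
    · rw [h, hιB1]; exact hg₂
    · rcases eq_or_ne x (T'.G.ι f₂) with h' | h'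
      · rw [h', hιB2]; exact hg₁
      · rw [hιBgen x h h']; exact hikeep x hx h h'
  have hinvB : ∀ x, keep x → ιB (ιB x) = x := by
    intro x hx
    rcases eq_or_ne x (T'.G.ι f₁) with h | h
    · rw [h, hιB1, hιB2]
    · rcases eq_or_ne x (T'.G.ι f₂) with h' | h'
      · rw [h', hιB2, hιB1]
      · rw [hιBgen x h h', hιBgen _ (fun hh => hx.2.2.1 (T'.G.ι_inj hh))
          (fun hh => hx.2.2.2 (T'.G.ι_inj hh)), T'.G.ι_invol]
  have hfixB : ∀ x, T'.G.r x = x → ιB x = x := by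
    intro x hx
    have h1 : x ≠ T'.G.ι f₁ := fun h => hg₁flag (by rw [← h, hx, h])
    have h2 : x ≠ T'.G.ι f₂ := fun h => hg₂flag (by rw [← h, hx, h])
    rw [hιBgen x h1 h2]
    exact T'.G.ι_fix x hx
  have hmark1 : ∀ k : Fin n, T'.G.mark k.castSucc ≠ T'.G.ι f₁ := by
    intro k h
    apply hmoved1
    rw [← h]
    exact T'.G.mark_leg _
  have hmark2 : ∀ k : Fin n, T'.G.mark k.castSucc ≠ T'.G.ι f₂ := by
    intro k h
    apply hmoved2
    rw [← h]
    exact T'.G.mark_leg _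
  have hmarkkeep : ∀ k : Fin n, keep (T'.G.mark k.castSucc) := by
    intro k
    refine ⟨fun h => (Fin.castSucc_lt_last k).ne (T'.G.mark_inj h),
      hflagv _ (T'.G.mark_flag _), ?_, ?_⟩
    · intro h
      apply hm1
      rw [← h]
      exact T'.G.mark_leg _
    · intro h
      apply hm2
      rw [← h]
      exact T'.G.mark_leg _
  -- the quotient graph
  set GT : WGraph (Fin n) :=
    { X := {x : T'.G.X // keep x}
      fin := inferInstance
      deq := inferInstance
      r := fun x => ⟨T'.G.r x.val, hrkeep x.val x.2⟩
      ι := fun x => ⟨ιB x.val, hkeepB x.val x.2⟩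
      r_idem := fun x => Subtype.ext (T'.G.r_idem x.val)
      ι_invol := fun x => Subtype.ext (hinvB x.val x.2)
      ι_fix := fun x h => Subtype.ext (hfixB x.val (congrArg Subtype.val h))
      w := fun x => T'.G.w x.val
      mark := fun k => ⟨T'.G.mark k.castSucc, hmarkkeep k⟩
      mark_flag := fun k h => T'.G.mark_flag k.castSucc (congrArg Subtype.val h)
      mark_leg := fun k => Subtype.ext (by
        show ιB _ = _
        rw [hιBgen _ (hmark1 k) (hmark2 k)]
        exact T'.G.mark_leg k.castSucc)
      mark_inj := fun a b h =>
        Fin.castSucc_injective n (T'.G.mark_inj (congrArg Subtype.val h))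
      mark_surj := by
        intro x h1 h2
        have h2' : ιB x.val = x.val := congrArg Subtype.val h2
        have hx1 : x.val ≠ T'.G.ι f₁ := by
          intro h
          rw [h, hιB1] at h2'
          exact hii h2'.symm
        have hx2 : x.val ≠ T'.G.ι f₂ := by
          intro h
          rw [h, hιB2] at h2'
          exact hii h2'
        rw [hιBgen x.val hx1 hx2] at h2'
        obtain ⟨j, hj⟩ := T'.G.mark_surj x.val (fun h => h1 (Subtype.ext h)) h2'
        obtain ⟨k, hk⟩ := (Fin.exists_castSucc_eq (i := j)).2
          (fun h => x.2.1 (by rw [← hj, h]; rfl))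
        exact ⟨k, Subtype.ext (show T'.G.mark k.castSucc = x.val by
          rw [hk, hj])⟩ } with hGT
  -- connectivity
  have ha₀keep : keep (T'.G.r (T'.G.ι f₁)) := hrkeep _ hg₁
  set a₀ : GT.X := ⟨T'.G.r (T'.G.ι f₁), ha₀keep⟩ with ha₀
  have hconn : GT.Connected := by
    constructor
    · exact ⟨a₀, Finset.mem_univ _, Subtype.ext (T'.G.r_idem _)⟩
    · intro a _ b _ ha hb
      set p : T'.G.X → GT.X :=
        fun x => if h : keep x then ⟨x, h⟩ else a₀ with hp
      have hpv : ∀ (x : T'.G.X) (hx : keep x), p x = ⟨x, hx⟩ := by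
        intro x hx
        exact dif_pos hx
      have hpbase : p (baseV T') = a₀ := by
        have h0 : ¬ keep (baseV T') := fun h => h.2.1 rfl
        exact dif_neg h0
      have hstep : ∀ u w, T'.G.subAdj Finset.univ u w →
          Relation.ReflTransGen (GT.subAdj Finset.univ) (p u) (p w) := by
        rintro u w ⟨f, -, hf1, rfl, rfl⟩
        by_cases hfL : f = lastLeg T'
        · rw [hfL, hLleg]
        by_cases hff1 : f = f₁
        · rw [hff1, hr1, hpbase, hpv _ ha₀keep]
        by_cases hff2 : f = f₂
        · rw [hff2, hr2, hpbase, hpv _ (hrkeep _ hg₂)]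
          apply Relation.ReflTransGen.single
          refine ⟨⟨T'.G.ι f₁, hg₁⟩, Finset.mem_univ _,
            fun h => hg₁flag (congrArg Subtype.val h), Subtype.ext rfl, ?_⟩
          apply Subtype.ext
          show T'.G.r (ιB (T'.G.ι f₁)) = T'.G.r (T'.G.ι f₂)
          rw [hιB1]
        by_cases hfg1 : f = T'.G.ι f₁
        · rw [hfg1, T'.G.ι_invol, hr1, hpbase, hpv _ ha₀keep]
        by_cases hfg2 : f = T'.G.ι f₂
        · rw [hfg2, T'.G.ι_invol, hr2, hpbase, hpv _ (hrkeep _ hg₂)]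
          apply Relation.ReflTransGen.single
          refine ⟨⟨T'.G.ι f₂, hg₂⟩, Finset.mem_univ _,
            fun h => hg₂flag (congrArg Subtype.val h), Subtype.ext rfl, ?_⟩
          apply Subtype.ext
          show T'.G.r (ιB (T'.G.ι f₂)) = T'.G.r (T'.G.ι f₁)
          rw [hιB2]
        · have hkf : keep f := ⟨hfL, hflagv f hf1, hff1, hff2⟩
          have hkif : keep (T'.G.ι f) := hikeep f hkf hfg1 hfg2
          rw [hpv _ (hrkeep f hkf), hpv _ (hrkeep _ hkif)]
          apply Relation.ReflTransGen.single
          refine ⟨⟨f, hkf⟩, Finset.mem_univ _,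
            fun h => hf1 (congrArg Subtype.val h), Subtype.ext rfl, ?_⟩
          apply Subtype.ext
          show T'.G.r (ιB f) = T'.G.r (T'.G.ι f)
          rw [hιBgen f hfg1 hfg2]
      have := rtg_lift p hstep a.val b.val
        (T'.conn.2 a.val (Finset.mem_univ _) b.val (Finset.mem_univ _)
          (congrArg Subtype.val ha) (congrArg Subtype.val hb))
      rwa [hpv a.val a.2, hpv b.val b.2, Subtype.coe_eta, Subtype.coe_eta] at this
  -- the length function
  set lenB : T'.G.X → P := fun x =>
    if x = T'.G.ι f₁ ∨ x = T'.G.ι f₂ then T'.len f₁ + T'.len f₂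
    else T'.len x with hlenB
  have hlen1 : lenB (T'.G.ι f₁) = T'.len f₁ + T'.len f₂ := by
    rw [hlenB]
    exact if_pos (Or.inl rfl)
  have hlen2 : lenB (T'.G.ι f₂) = T'.len f₁ + T'.len f₂ := by
    rw [hlenB]
    exact if_pos (Or.inr rfl)
  have hlengen : ∀ x, x ≠ T'.G.ι f₁ → x ≠ T'.G.ι f₂ → lenB x = T'.len x := by
    intro x h1 h2
    rw [hlenB]
    exact if_neg (fun hh => hh.elim h1 h2)
  -- the tropical curve
  set T : Trop P (Fin n) :=
    { G := GT
      conn := hconn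
      len := fun x => lenB x.val
      len_symm := by
        intro x
        show lenB (ιB x.val) = lenB x.val
        rcases eq_or_ne x.val (T'.G.ι f₁) with h | h
        · rw [h, hιB1, hlen2, hlen1]
        rcases eq_or_ne x.val (T'.G.ι f₂) with h' | h'
        · rw [h', hιB2, hlen1, hlen2]
        · rw [hιBgen x.val h h',
            hlengen _ (fun hh => x.2.2.2.1 (T'.G.ι_inj hh))
              (fun hh => x.2.2.2.2 (T'.G.ι_inj hh)),
            hlengen _ h h', T'.len_symm]
      len_ne := by
        intro x hx
        show lenB x.val ≠ 0
        rcases eq_or_ne x.val (T'.G.ι f₁) with h | h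
        · rw [h, hlen1]
          exact fun h0 => T'.len_ne f₁ hm1 (hsh _ _ h0)
        rcases eq_or_ne x.val (T'.G.ι f₂) with h' | h'
        · rw [h', hlen2]
          exact fun h0 => T'.len_ne f₁ hm1 (hsh _ _ h0)
        · rw [hlengen _ h h']
          apply T'.len_ne
          intro hh
          apply hx
          apply Subtype.ext
          show ιB x.val = x.val
          rw [hιBgen x.val h h', hh] } with hT
  -- counting: moved flags
  have hmovedT : (Finset.univ.filter fun x : GT.X => GT.ι x ≠ x).card =
      (Finset.univ.filter fun x : T'.G.X =>
        (x ≠ f₁ ∧ x ≠ f₂) ∧ T'.G.ι x ≠ x).card := by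
    apply subtype_filter_card
    · intro x
      constructor
      · intro hx
        refine ⟨⟨x.2.2.2.1, x.2.2.2.2⟩, ?_⟩
        rcases eq_or_ne x.val (T'.G.ι f₁) with h | h
        · rw [h]; exact hmoved1
        rcases eq_or_ne x.val (T'.G.ι f₂) with h' | h'
        · rw [h']; exact hmoved2
        · intro hh
          exact hx (Subtype.ext (by rw [show (GT.ι x).val = ιB x.val from rfl,
              hιBgen x.val h h', hh]))
      · rintro ⟨-, hx⟩ hh
        have hh' : ιB x.val = x.val := congrArg Subtype.val hh
        rcases eq_or_ne x.val (T'.G.ι f₁) with h | h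
        · rw [h, hιB1] at hh'; exact hii hh'.symm
        rcases eq_or_ne x.val (T'.G.ι f₂) with h' | h'
        · rw [h', hιB2] at hh'; exact hii hh'
        · rw [hιBgen x.val h h'] at hh'
          exact hx hh'
    · rintro x ⟨⟨h1, h2⟩, h3⟩
      exact ⟨fun h => h3 (h ▸ hLleg), fun h => h3 (h ▸ hιv), h1, h2⟩
  have hmovedE : Finset.univ.filter (fun x : T'.G.X =>
      (x ≠ f₁ ∧ x ≠ f₂) ∧ T'.G.ι x ≠ x) =
      ((Finset.univ.filter fun x : T'.G.X => T'.G.ι x ≠ x).erase f₁).erase f₂ := by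
    ext x
    simp only [Finset.mem_filter, Finset.mem_univ, true_and, Finset.mem_erase]
    tauto
  have hm1mem : f₁ ∈ Finset.univ.filter fun x : T'.G.X => T'.G.ι x ≠ x :=
    Finset.mem_filter.2 ⟨Finset.mem_univ _, hm1⟩
  have hm2mem : f₂ ∈ ((Finset.univ.filter fun x : T'.G.X =>
      T'.G.ι x ≠ x).erase f₁) :=
    Finset.mem_erase.2 ⟨hf12.symm, Finset.mem_filter.2 ⟨Finset.mem_univ _, hm2⟩⟩
  have hmoved2' : 2 ≤ (Finset.univ.filter fun x : T'.G.X => T'.G.ι x ≠ x).card := by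
    have : ({f₁, f₂} : Finset T'.G.X) ⊆
        Finset.univ.filter fun x : T'.G.X => T'.G.ι x ≠ x := by
      intro x hx
      rcases Finset.mem_insert.1 hx with rfl | hx
      · exact hm1mem
      · rw [Finset.mem_singleton] at hx
        subst hx
        exact Finset.mem_filter.2 ⟨Finset.mem_univ _, hm2⟩
    calc 2 = ({f₁, f₂} : Finset T'.G.X).card := (Finset.card_pair hf12).symm
    _ ≤ _ := Finset.card_le_card this
  have hmovedcard : (Finset.univ.filter fun x : GT.X => GT.ι x ≠ x).card + 2 =
      (Finset.univ.filter fun x : T'.G.X => T'.G.ι x ≠ x).card := by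
    rw [hmovedT, hmovedE, Finset.card_erase_of_mem hm2mem,
      Finset.card_erase_of_mem hm1mem]
    omega
  -- counting: vertices
  have hvertT : (Finset.univ.filter fun x : GT.X => GT.r x = x).card =
      (Finset.univ.filter fun x : T'.G.X =>
        x ≠ baseV T' ∧ T'.G.r x = x).card := by
    apply subtype_filter_card
    · intro x
      constructor
      · intro h
        exact ⟨x.2.2.1, congrArg Subtype.val h⟩
      · intro h
        exact Subtype.ext h.2
    · rintro x ⟨h1, h2⟩
      exact hvertkeep x h2 h1
  have hvertE : Finset.univ.filter (fun x : T'.G.X =>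
      x ≠ baseV T' ∧ T'.G.r x = x) =
      (Finset.univ.filter fun x : T'.G.X => T'.G.r x = x).erase (baseV T') := by
    ext x
    simp only [Finset.mem_filter, Finset.mem_univ, true_and, Finset.mem_erase]
  have hvmem : baseV T' ∈ Finset.univ.filter fun x : T'.G.X => T'.G.r x = x :=
    Finset.mem_filter.2 ⟨Finset.mem_univ _, hvv⟩
  have hvertcard : (Finset.univ.filter fun x : GT.X => GT.r x = x).card + 1 =
      (Finset.univ.filter fun x : T'.G.X => T'.G.r x = x).card := by
    rw [hvertT, hvertE, Finset.card_erase_of_mem hvmem]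
    have : 1 ≤ (Finset.univ.filter fun x : T'.G.X => T'.G.r x = x).card :=
      Finset.card_pos.2 ⟨baseV T', hvmem⟩
    omega
  -- counting: weights
  have hsum : (∑ x ∈ Finset.univ.filter fun x : GT.X => GT.r x = x,
      (GT.w x : ℤ)) =
      ∑ x ∈ Finset.univ.filter fun x : T'.G.X => T'.G.r x = x, (T'.G.w x : ℤ) := by
    rw [show (∑ x ∈ Finset.univ.filter fun x : T'.G.X => T'.G.r x = x,
        (T'.G.w x : ℤ)) = ∑ x ∈ (Finset.univ.filter fun x : T'.G.X =>
          T'.G.r x = x).erase (baseV T'), (T'.G.w x : ℤ) from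
      (Finset.sum_erase _ (by rw [hw0]; rfl)).symm, ← hvertE]
    refine subtype_filter_sum _ _ _ ?_ ?_ (fun a => (T'.G.w a : ℤ))
    · intro x
      constructor
      · intro h
        exact ⟨x.2.2.1, congrArg Subtype.val h⟩
      · intro h
        exact Subtype.ext h.2
    · rintro x ⟨h1, h2⟩
      exact hvertkeep x h2 h1
  have hE : GT.edgeSet.card + 1 = T'.G.edgeSet.card := by
    have e1 := GT.card_moved
    have e2 := T'.G.card_moved
    omega
  have hgenus : GT.genus = g := by
    rw [← hgen]
    show GT.subB1 _ + _ = T'.G.subB1 _ + _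
    unfold WGraph.subB1
    show (GT.edgeSet.card : ℤ) - _ + 1 + _ = (T'.G.edgeSet.card : ℤ) - _ + 1 + _
    rw [← hsum]
    have c1 : (GT.edgeSet.card : ℤ) + 1 = T'.G.edgeSet.card := by
      exact_mod_cast congrArg (Nat.cast : ℕ → ℤ) hE
    have c2 : ((Finset.univ.filter fun x : GT.X => GT.r x = x).card : ℤ) + 1 =
        (Finset.univ.filter fun x : T'.G.X => T'.G.r x = x).card := by
      exact_mod_cast congrArg (Nat.cast : ℕ → ℤ) hvertcard
    omega
  -- stability
  have hstabT : GT.Stable := by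
    intro x hx
    have hxval : T'.G.r x.val = x.val := congrArg Subtype.val hx
    have hval : GT.val x = T'.G.val x.val := by
      apply subtype_filter_card
      · intro y
        constructor
        · rintro ⟨hy1, hy2⟩
          exact ⟨fun h => hy1 (Subtype.ext h), congrArg Subtype.val hy2⟩
        · rintro ⟨hy1, hy2⟩
          exact ⟨fun h => hy1 (congrArg Subtype.val h), Subtype.ext hy2⟩
      · rintro y ⟨hy1, hy2⟩
        have hyv : T'.G.r y ≠ baseV T' := by
          rw [hy2]
          exact fun h => x.2.2.1 h
        refine ⟨fun h => hyv (h ▸ hrL), fun h => hy1 (by rw [h, hvv]), ?_, ?_⟩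
        · intro h; exact hyv (h ▸ hr1)
        · intro h; exact hyv (h ▸ hr2)
    rw [hval]
    exact hstab x.val hxval
  refine ⟨T, hstabT, hgenus, ⟨⟨Subtype.val, Subtype.val_injective,
    fun x => rfl, fun x _ => rfl, Or.inr (Or.inl ?_)⟩⟩⟩
  refine ⟨hS, f₁, f₂, hf12, hm1, hm2, hnl, h1L, h2L, hr1, hr2, ?_, ?_, ?_, ?_, ?_,
    fun k => rfl⟩
  · intro z hz1 hz2 hz3 hz4
    exact ⟨⟨z, hz1, hz2, hz3, hz4⟩, rfl⟩
  · intro x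
    exact ⟨x.2.1, x.2.2.1, x.2.2.2.1, x.2.2.2.2⟩
  · intro x hx1 hx2
    show ιB x.val = T'.G.ι x.val
    exact hιBgen x.val hx1 hx2
  · exact ⟨⟨T'.G.ι f₁, hg₁⟩, ⟨T'.G.ι f₂, hg₂⟩, rfl, rfl,
      Subtype.ext (show ιB (T'.G.ι f₁) = T'.G.ι f₂ from hιB1), hlen1⟩
  · intro x hx hx1 hx2
    exact (hlengen x.val hx1 hx2).symm

end CaseBProof

section CaseCProof

variable {P : Type} [AddCommMonoid P] {n : ℕ} {g : ℤ}

lemma caseC_exists (T' : Trop P (Fin (n + 1))) (hstab : T'.G.Stable)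
    (hgen : T'.G.genus = g)
    (hS : ¬ StarStable T') (f : T'.G.X) (i : Fin n)
    (hfm : T'.G.ι f ≠ f) (hfL : f ≠ lastLeg T')
    (hrf : T'.G.r f = baseV T')
    (hrm : T'.G.r (T'.G.mark i.castSucc) = baseV T')
    (honly : ∀ x, T'.G.r x ≠ x → T'.G.r x = baseV T' →
      x = lastLeg T' ∨ x = f ∨ x = T'.G.mark i.castSucc)
    (hw0 : T'.G.w (baseV T') = 0) :
    ∃ T : Trop P (Fin n), T.G.Stable ∧ T.G.genus = g ∧
      Nonempty (ForgetData T' T) := by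
  classical
  have hLflag : T'.G.r (lastLeg T') ≠ lastLeg T' := T'.G.mark_flag _
  have hLleg : T'.G.ι (lastLeg T') = lastLeg T' := T'.G.mark_leg _
  have hvv : T'.G.r (baseV T') = baseV T' := T'.G.r_idem _
  have hrL : T'.G.r (lastLeg T') = baseV T' := rfl
  have hιv : T'.G.ι (baseV T') = baseV T' := T'.G.ι_fix _ hvv
  have hffl : T'.G.r f ≠ f := T'.G.flag_of_moved hfm
  have hmleg : T'.G.ι (T'.G.mark i.castSucc) = T'.G.mark i.castSucc :=
    T'.G.mark_leg _
  have hmflag : T'.G.r (T'.G.mark i.castSucc) ≠ T'.G.mark i.castSucc :=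
    T'.G.mark_flag _
  have hmL : T'.G.mark i.castSucc ≠ lastLeg T' :=
    fun h => (Fin.castSucc_lt_last i).ne (T'.G.mark_inj h)
  have hfne : f ≠ T'.G.mark i.castSucc := by
    intro h
    apply hfm
    rw [h, hmleg]
  have hmoved1 : T'.G.ι (T'.G.ι f) ≠ T'.G.ι f := by
    rw [T'.G.ι_invol]; exact fun h => hfm h.symm
  have hgfflag : T'.G.r (T'.G.ι f) ≠ T'.G.ι f := T'.G.flag_of_moved hmoved1
  -- keep predicate
  set keep : T'.G.X → Prop := fun x =>
    x ≠ lastLeg T' ∧ x ≠ baseV T' ∧ x ≠ f ∧ x ≠ T'.G.mark i.castSucc with hkeep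
  have hkiota : ∀ x, x ≠ lastLeg T' → x ≠ baseV T' →
      T'.G.ι x ≠ lastLeg T' ∧ T'.G.ι x ≠ baseV T' := by
    intro x h1 h2
    constructor
    · intro h; exact h1 (by rw [← T'.G.ι_invol x, h, hLleg])
    · intro h; exact h2 (by rw [← T'.G.ι_invol x, h, hιv])
  have hflagv : ∀ x, T'.G.r x ≠ x → x ≠ baseV T' := by
    intro x hx h
    exact hx (by rw [h, hvv])
  have hfv : f ≠ baseV T' := hflagv f hffl
  have hmv : T'.G.mark i.castSucc ≠ baseV T' := hflagv _ hmflag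
  have hgf : keep (T'.G.ι f) := by
    refine ⟨(hkiota f hfL hfv).1, (hkiota f hfL hfv).2, hfm, ?_⟩
    intro h
    apply hfne
    rw [← T'.G.ι_invol f, h, hmleg]
  have hvertkeep : ∀ u, T'.G.r u = u → u ≠ baseV T' → keep u := by
    intro u hu huv
    refine ⟨fun h => hLflag (h ▸ hu), huv, fun h => hffl (h ▸ hu),
      fun h => hmflag (h ▸ hu)⟩
  have hrkeep : ∀ x, keep x → keep (T'.G.r x) := by
    intro x hx
    rcases eq_or_ne (T'.G.r x) x with h | h
    · rwa [h]
    · refine hvertkeep _ (T'.G.r_idem x) ?_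
      intro hrv
      rcases honly x h hrv with h' | h' | h'
      · exact hx.1 h'
      · exact hx.2.2.1 h'
      · exact hx.2.2.2 h'
  have hikeep : ∀ x, keep x → x ≠ T'.G.ι f → keep (T'.G.ι x) := by
    intro x hx hx1
    refine ⟨(hkiota x hx.1 hx.2.1).1, (hkiota x hx.1 hx.2.1).2, ?_, ?_⟩
    · intro h; exact hx1 (by rw [← T'.G.ι_invol x, h])
    · intro h
      apply hx.2.2.2
      rw [← T'.G.ι_invol x, h, hmleg]
  have hrg : T'.G.r (T'.G.ι f) ≠ baseV T' := by
    intro h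
    rcases honly _ hgfflag h with h' | h' | h'
    · exact hgf.1 h'
    · exact hfm h'
    · exact hgf.2.2.2 h'
  -- the modified involution
  set ιB : T'.G.X → T'.G.X := fun x =>
    if x = T'.G.ι f then x else T'.G.ι x with hιB
  have hιB1 : ιB (T'.G.ι f) = T'.G.ι f := by simp [hιB]
  have hιBgen : ∀ x, x ≠ T'.G.ι f → ιB x = T'.G.ι x := by
    intro x h1
    simp [hιB, h1]
  have hkeepB : ∀ x, keep x → keep (ιB x) := by
    intro x hx
    rcases eq_or_ne x (T'.G.ι f) with h | h
    · rw [h, hιB1]; exact hgf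
    · rw [hιBgen x h]; exact hikeep x hx h
  have hinvB : ∀ x, keep x → ιB (ιB x) = x := by
    intro x hx
    rcases eq_or_ne x (T'.G.ι f) with h | h
    · rw [h, hιB1, hιB1]
    · rw [hιBgen x h, hιBgen _ (fun hh => hx.2.2.1 (T'.G.ι_inj hh)),
        T'.G.ι_invol]
  have hfixB : ∀ x, T'.G.r x = x → ιB x = x := by
    intro x hx
    have h1 : x ≠ T'.G.ι f := fun h => hgfflag (by rw [← h, hx, h])
    rw [hιBgen x h1]
    exact T'.G.ι_fix x hx
  have hmarkne : ∀ k : Fin n, T'.G.mark k.castSucc ≠ T'.G.ι f := by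
    intro k h
    apply hmoved1
    rw [← h]
    exact T'.G.mark_leg _
  have hmarkkeep : ∀ k : Fin n, k ≠ i → keep (T'.G.mark k.castSucc) := by
    intro k hk
    refine ⟨fun h => (Fin.castSucc_lt_last k).ne (T'.G.mark_inj h),
      hflagv _ (T'.G.mark_flag _), ?_, ?_⟩
    · intro h
      apply hfm
      rw [← h]
      exact T'.G.mark_leg _
    · intro h
      exact hk (Fin.castSucc_injective n (T'.G.mark_inj h))
  -- the new marking
  set markB : Fin n → T'.G.X := fun k =>
    if k = i then T'.G.ι f else T'.G.mark k.castSucc with hmarkB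
  have hmarkBi : markB i = T'.G.ι f := by simp [hmarkB]
  have hmarkBne : ∀ k, k ≠ i → markB k = T'.G.mark k.castSucc := by
    intro k hk
    simp [hmarkB, hk]
  have hmarkBkeep : ∀ k, keep (markB k) := by
    intro k
    rcases eq_or_ne k i with h | h
    · rw [h, hmarkBi]; exact hgf
    · rw [hmarkBne k h]; exact hmarkkeep k h
  have hmarkBflag : ∀ k, T'.G.r (markB k) ≠ markB k := by
    intro k
    rcases eq_or_ne k i with h | h
    · rw [h, hmarkBi]; exact hgfflag
    · rw [hmarkBne k h]; exact T'.G.mark_flag _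
  have hmarkBleg : ∀ k, ιB (markB k) = markB k := by
    intro k
    rcases eq_or_ne k i with h | h
    · rw [h, hmarkBi, hιB1]
    · rw [hmarkBne k h, hιBgen _ (hmarkne k)]
      exact T'.G.mark_leg _
  have hmarkBinj : Function.Injective markB := by
    intro a b hab
    rcases eq_or_ne a i with ha | ha <;> rcases eq_or_ne b i with hb | hb
    · rw [ha, hb]
    · rw [ha, hmarkBi, hmarkBne b hb] at hab
      exact absurd hab.symm (hmarkne b)
    · rw [hb, hmarkBi, hmarkBne a ha] at hab
      exact absurd hab (hmarkne a)
    · rw [hmarkBne a ha, hmarkBne b hb] at hab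
      exact Fin.castSucc_injective n (T'.G.mark_inj hab)
  -- the quotient graph
  set GT : WGraph (Fin n) :=
    { X := {x : T'.G.X // keep x}
      fin := inferInstance
      deq := inferInstance
      r := fun x => ⟨T'.G.r x.val, hrkeep x.val x.2⟩
      ι := fun x => ⟨ιB x.val, hkeepB x.val x.2⟩
      r_idem := fun x => Subtype.ext (T'.G.r_idem x.val)
      ι_invol := fun x => Subtype.ext (hinvB x.val x.2)
      ι_fix := fun x h => Subtype.ext (hfixB x.val (congrArg Subtype.val h))
      w := fun x => T'.G.w x.val
      mark := fun k => ⟨markB k, hmarkBkeep k⟩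
      mark_flag := fun k h => hmarkBflag k (congrArg Subtype.val h)
      mark_leg := fun k => Subtype.ext (hmarkBleg k)
      mark_inj := fun a b h => hmarkBinj (congrArg Subtype.val h)
      mark_surj := by
        intro x h1 h2
        have h2' : ιB x.val = x.val := congrArg Subtype.val h2
        rcases eq_or_ne x.val (T'.G.ι f) with h | h
        · exact ⟨i, Subtype.ext (show markB i = x.val by rw [hmarkBi, h])⟩
        rw [hιBgen x.val h] at h2'
        obtain ⟨j, hj⟩ := T'.G.mark_surj x.val (fun hh => h1 (Subtype.ext hh)) h2'
        obtain ⟨k, hk⟩ := (Fin.exists_castSucc_eq (i := j)).2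
          (fun hh => x.2.1 (by rw [← hj, hh]; rfl))
        have hki : k ≠ i := by
          intro hh
          apply x.2.2.2.2
          rw [← hj, ← hk, hh]
        exact ⟨k, Subtype.ext (show markB k = x.val by
          rw [hmarkBne k hki, hk, hj])⟩ } with hGT
  -- connectivity
  have ha₀keep : keep (T'.G.r (T'.G.ι f)) := hrkeep _ hgf
  set a₀ : GT.X := ⟨T'.G.r (T'.G.ι f), ha₀keep⟩ with ha₀
  have hconn : GT.Connected := by
    constructor
    · exact ⟨a₀, Finset.mem_univ _, Subtype.ext (T'.G.r_idem _)⟩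
    · intro a _ b _ ha hb
      set p : T'.G.X → GT.X :=
        fun x => if h : keep x then ⟨x, h⟩ else a₀ with hp
      have hpv : ∀ (x : T'.G.X) (hx : keep x), p x = ⟨x, hx⟩ := by
        intro x hx
        exact dif_pos hx
      have hpbase : p (baseV T') = a₀ := by
        have h0 : ¬ keep (baseV T') := fun h => h.2.1 rfl
        exact dif_neg h0
      have hstep : ∀ u w, T'.G.subAdj Finset.univ u w →
          Relation.ReflTransGen (GT.subAdj Finset.univ) (p u) (p w) := by
        rintro u w ⟨f', -, hf1, rfl, rfl⟩
        by_cases hfL' : f' = lastLeg T'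
        · rw [hfL', hLleg]
        by_cases hff1 : f' = f
        · rw [hff1, hrf, hpbase, hpv _ ha₀keep]
        by_cases hffm : f' = T'.G.mark i.castSucc
        · rw [hffm, hmleg]
        by_cases hfg1 : f' = T'.G.ι f
        · rw [hfg1, T'.G.ι_invol, hrf, hpbase, hpv _ ha₀keep]
        · have hkf : keep f' := ⟨hfL', hflagv f' hf1, hff1, hffm⟩
          have hkif : keep (T'.G.ι f') := hikeep f' hkf hfg1
          rw [hpv _ (hrkeep f' hkf), hpv _ (hrkeep _ hkif)]
          apply Relation.ReflTransGen.single
          refine ⟨⟨f', hkf⟩, Finset.mem_univ _,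
            fun h => hf1 (congrArg Subtype.val h), Subtype.ext rfl, ?_⟩
          apply Subtype.ext
          show T'.G.r (ιB f') = T'.G.r (T'.G.ι f')
          rw [hιBgen f' hfg1]
      have := rtg_lift p hstep a.val b.val
        (T'.conn.2 a.val (Finset.mem_univ _) b.val (Finset.mem_univ _)
          (congrArg Subtype.val ha) (congrArg Subtype.val hb))
      rwa [hpv a.val a.2, hpv b.val b.2, Subtype.coe_eta, Subtype.coe_eta] at this
  -- the tropical curve
  set T : Trop P (Fin n) :=
    { G := GT
      conn := hconn
      len := fun x => T'.len x.val
      len_symm := by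
        intro x
        show T'.len (ιB x.val) = T'.len x.val
        rcases eq_or_ne x.val (T'.G.ι f) with h | h
        · rw [h, hιB1]
        · rw [hιBgen x.val h, T'.len_symm]
      len_ne := by
        intro x hx
        show T'.len x.val ≠ 0
        have h : x.val ≠ T'.G.ι f := by
          intro h
          apply hx
          apply Subtype.ext
          show ιB x.val = x.val
          rw [h, hιB1]
        apply T'.len_ne
        intro hh
        apply hx
        apply Subtype.ext
        show ιB x.val = x.val
        rw [hιBgen x.val h, hh] } with hT
  -- counting: moved flags
  have hmovedT : (Finset.univ.filter fun x : GT.X => GT.ι x ≠ x).card =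
      (Finset.univ.filter fun x : T'.G.X =>
        (x ≠ f ∧ x ≠ T'.G.ι f) ∧ T'.G.ι x ≠ x).card := by
    apply subtype_filter_card
    · intro x
      constructor
      · intro hx
        have h : x.val ≠ T'.G.ι f := by
          intro h
          apply hx
          apply Subtype.ext
          show ιB x.val = x.val
          rw [h, hιB1]
        refine ⟨⟨x.2.2.2.1, h⟩, ?_⟩
        intro hh
        apply hx
        apply Subtype.ext
        show ιB x.val = x.val
        rw [hιBgen x.val h, hh]
      · rintro ⟨⟨-, h⟩, hx⟩ hh
        have hh' : ιB x.val = x.val := congrArg Subtype.val hh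
        rw [hιBgen x.val h] at hh'
        exact hx hh'
    · rintro x ⟨⟨h1, h2⟩, h3⟩
      refine ⟨fun h => h3 (h ▸ hLleg), fun h => h3 (h ▸ hιv), h1, ?_⟩
      intro h
      exact h3 (h ▸ hmleg)
  have hmovedE : Finset.univ.filter (fun x : T'.G.X =>
      (x ≠ f ∧ x ≠ T'.G.ι f) ∧ T'.G.ι x ≠ x) =
      ((Finset.univ.filter fun x : T'.G.X => T'.G.ι x ≠ x).erase f).erase
        (T'.G.ι f) := by
    ext x
    simp only [Finset.mem_filter, Finset.mem_univ, true_and, Finset.mem_erase]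
    tauto
  have hm1mem : f ∈ Finset.univ.filter fun x : T'.G.X => T'.G.ι x ≠ x :=
    Finset.mem_filter.2 ⟨Finset.mem_univ _, hfm⟩
  have hm2mem : T'.G.ι f ∈ ((Finset.univ.filter fun x : T'.G.X =>
      T'.G.ι x ≠ x).erase f) :=
    Finset.mem_erase.2 ⟨fun h => hfm h, Finset.mem_filter.2
      ⟨Finset.mem_univ _, hmoved1⟩⟩
  have hmoved2' : 2 ≤ (Finset.univ.filter fun x : T'.G.X => T'.G.ι x ≠ x).card := by
    have hsub : ({f, T'.G.ι f} : Finset T'.G.X) ⊆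
        Finset.univ.filter fun x : T'.G.X => T'.G.ι x ≠ x := by
      intro x hx
      rcases Finset.mem_insert.1 hx with rfl | hx
      · exact hm1mem
      · rw [Finset.mem_singleton] at hx
        subst hx
        exact Finset.mem_filter.2 ⟨Finset.mem_univ _, hmoved1⟩
    calc 2 = ({f, T'.G.ι f} : Finset T'.G.X).card :=
        (Finset.card_pair (fun h => hfm h.symm)).symm
    _ ≤ _ := Finset.card_le_card hsub
  have hmovedcard : (Finset.univ.filter fun x : GT.X => GT.ι x ≠ x).card + 2 =
      (Finset.univ.filter fun x : T'.G.X => T'.G.ι x ≠ x).card := by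
    rw [hmovedT, hmovedE, Finset.card_erase_of_mem hm2mem,
      Finset.card_erase_of_mem hm1mem]
    omega
  -- counting: vertices
  have hvertT : (Finset.univ.filter fun x : GT.X => GT.r x = x).card =
      (Finset.univ.filter fun x : T'.G.X =>
        x ≠ baseV T' ∧ T'.G.r x = x).card := by
    apply subtype_filter_card
    · intro x
      constructor
      · intro h
        exact ⟨x.2.2.1, congrArg Subtype.val h⟩
      · intro h
        exact Subtype.ext h.2
    · rintro x ⟨h1, h2⟩
      exact hvertkeep x h2 h1
  have hvertE : Finset.univ.filter (fun x : T'.G.X =>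
      x ≠ baseV T' ∧ T'.G.r x = x) =
      (Finset.univ.filter fun x : T'.G.X => T'.G.r x = x).erase (baseV T') := by
    ext x
    simp only [Finset.mem_filter, Finset.mem_univ, true_and, Finset.mem_erase]
  have hvmem : baseV T' ∈ Finset.univ.filter fun x : T'.G.X => T'.G.r x = x :=
    Finset.mem_filter.2 ⟨Finset.mem_univ _, hvv⟩
  have hvertcard : (Finset.univ.filter fun x : GT.X => GT.r x = x).card + 1 =
      (Finset.univ.filter fun x : T'.G.X => T'.G.r x = x).card := by
    rw [hvertT, hvertE, Finset.card_erase_of_mem hvmem]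
    have : 1 ≤ (Finset.univ.filter fun x : T'.G.X => T'.G.r x = x).card :=
      Finset.card_pos.2 ⟨baseV T', hvmem⟩
    omega
  -- counting: weights
  have hsum : (∑ x ∈ Finset.univ.filter fun x : GT.X => GT.r x = x,
      (GT.w x : ℤ)) =
      ∑ x ∈ Finset.univ.filter fun x : T'.G.X => T'.G.r x = x, (T'.G.w x : ℤ) := by
    rw [show (∑ x ∈ Finset.univ.filter fun x : T'.G.X => T'.G.r x = x,
        (T'.G.w x : ℤ)) = ∑ x ∈ (Finset.univ.filter fun x : T'.G.X =>
          T'.G.r x = x).erase (baseV T'), (T'.G.w x : ℤ) from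
      (Finset.sum_erase _ (by rw [hw0]; rfl)).symm, ← hvertE]
    refine subtype_filter_sum _ _ _ ?_ ?_ (fun a => (T'.G.w a : ℤ))
    · intro x
      constructor
      · intro h
        exact ⟨x.2.2.1, congrArg Subtype.val h⟩
      · intro h
        exact Subtype.ext h.2
    · rintro x ⟨h1, h2⟩
      exact hvertkeep x h2 h1
  have hE : GT.edgeSet.card + 1 = T'.G.edgeSet.card := by
    have e1 := GT.card_moved
    have e2 := T'.G.card_moved
    omega
  have hgenus : GT.genus = g := by
    rw [← hgen]
    show GT.subB1 _ + _ = T'.G.subB1 _ + _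
    unfold WGraph.subB1
    show (GT.edgeSet.card : ℤ) - _ + 1 + _ = (T'.G.edgeSet.card : ℤ) - _ + 1 + _
    rw [← hsum]
    have c1 : (GT.edgeSet.card : ℤ) + 1 = T'.G.edgeSet.card := by
      exact_mod_cast congrArg (Nat.cast : ℕ → ℤ) hE
    have c2 : ((Finset.univ.filter fun x : GT.X => GT.r x = x).card : ℤ) + 1 =
        (Finset.univ.filter fun x : T'.G.X => T'.G.r x = x).card := by
      exact_mod_cast congrArg (Nat.cast : ℕ → ℤ) hvertcard
    omega
  -- stability
  have hstabT : GT.Stable := by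
    intro x hx
    have hxval : T'.G.r x.val = x.val := congrArg Subtype.val hx
    have hval : GT.val x = T'.G.val x.val := by
      apply subtype_filter_card
      · intro y
        constructor
        · rintro ⟨hy1, hy2⟩
          exact ⟨fun h => hy1 (Subtype.ext h), congrArg Subtype.val hy2⟩
        · rintro ⟨hy1, hy2⟩
          exact ⟨fun h => hy1 (congrArg Subtype.val h), Subtype.ext hy2⟩
      · rintro y ⟨hy1, hy2⟩
        have hyv : T'.G.r y ≠ baseV T' := by
          rw [hy2]
          exact fun h => x.2.2.1 h
        refine ⟨fun h => hyv (h ▸ hrL), fun h => hy1 (by rw [h, hvv]), ?_, ?_⟩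
        · intro h; exact hyv (h ▸ hrf)
        · intro h; exact hyv (h ▸ hrm)
    rw [hval]
    exact hstab x.val hxval
  refine ⟨T, hstabT, hgenus, ⟨⟨Subtype.val, Subtype.val_injective,
    fun x => rfl, fun x _ => rfl, Or.inr (Or.inr ?_)⟩⟩⟩
  refine ⟨hS, f, i, hfm, hfL, hmL, hrf, hrm, ?_, ?_, ?_, ?_, ?_, ?_⟩
  · intro z hz1 hz2 hz3 hz4
    exact ⟨⟨z, hz1, hz2, hz3, hz4⟩, rfl⟩
  · intro x
    exact ⟨x.2.1, x.2.2.1, x.2.2.2.1, x.2.2.2.2⟩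
  · intro x hx1
    show ιB x.val = T'.G.ι x.val
    exact hιBgen x.val hx1
  · exact ⟨⟨T'.G.ι f, hgf⟩, rfl, Subtype.ext hιB1, Subtype.ext (hmarkBi)⟩
  · intro x hx
    rfl
  · intro k hk
    show markB k = T'.G.mark k.castSucc
    exact hmarkBne k hk

end CaseCProof

/-- The forgetful construction is well defined and exhaustive.
Let `Γ` be a stable tropical curve of genus `g` with `n+1` marked legs over a
sharp, integral, saturated monoid `P` (with `2g - 2 + n > 0`).  If `Γ_*` (the
result of deleting the flag of `l_{n+1}`) is not stable, then the vertex `v` that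
carried `l_{n+1}` has weight `0` and valence `2` in `Γ_*` (i.e. valence `3` in
`Γ`), it is the unique unstable vertex of `Γ_*` (all others remain stable), its two
remaining flags are `f₁, f₂` and they either belong to two distinct edges (case b)
or to one edge and one leg (case c): they cannot be the two flags of a single loop,
and they cannot both be legs; in case (b) the new edge has length
`d e₁ + d e₂ ≠ 0`.  Moreover in all cases `π(Γ)` is a stable tropical curve of
genus `g` with `n` marked legs over `P` (i.e. there is a stable tropical curve `T`
of genus `g` with a realization of the forgetful construction from `Γ` to `T`). -/
theorem forgetful_map_well_defined {P : Type} [AddCommMonoid P]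
    (hsh : Sharp P) (hint : IntegralMonoid P) (hsat : SaturatedMonoid P)
    {n : ℕ} {g : ℤ} (hgn : 0 < 2 * g - 2 + (n : ℤ))
    (T' : Trop P (Fin (n + 1))) (hstab : T'.G.Stable) (hgen : T'.G.genus = g) :
    (¬ StarStable T' →
      T'.G.w (baseV T') = 0 ∧ T'.G.val (baseV T') = 3 ∧
      (∀ x, T'.G.IsVertex x → x ≠ baseV T' →
        0 < 2 * (T'.G.w x : ℤ) - 2 + (T'.G.val x : ℤ)) ∧
      ∃ f₁ f₂ : T'.G.X, f₁ ≠ f₂ ∧ f₁ ≠ lastLeg T' ∧ f₂ ≠ lastLeg T' ∧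
        T'.G.r f₁ ≠ f₁ ∧ T'.G.r f₂ ≠ f₂ ∧
        T'.G.r f₁ = baseV T' ∧ T'.G.r f₂ = baseV T' ∧
        (∀ x, T'.G.r x ≠ x → T'.G.r x = baseV T' →
          x = lastLeg T' ∨ x = f₁ ∨ x = f₂) ∧
        T'.G.ι f₁ ≠ f₂ ∧
        ¬ (T'.G.ι f₁ = f₁ ∧ T'.G.ι f₂ = f₂) ∧
        ((T'.G.ι f₁ ≠ f₁ ∧ T'.G.ι f₂ ≠ f₂ ∧ T'.len f₁ + T'.len f₂ ≠ 0) ∨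
          (T'.G.ι f₁ ≠ f₁ ∧ T'.G.ι f₂ = f₂) ∨
          (T'.G.ι f₁ = f₁ ∧ T'.G.ι f₂ ≠ f₂))) ∧
    ∃ T : Trop P (Fin n), T.G.Stable ∧ T.G.genus = g ∧
      Nonempty (ForgetData T' T) := by
  constructor
  · intro hS
    exact structure_lemma hsh hgn T' hstab hgen hS
  · by_cases hS : StarStable T'
    · exact caseA_exists T' hstab hgen hS
    · obtain ⟨hw0, hval3, -, f₁, f₂, hf12, h1L, h2L, hfl1, hfl2, hr1, hr2, honly,
        hnoloop, hnotboth, htri⟩ := structure_lemma hsh hgn T' hstab hgen hS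
      rcases htri with ⟨hm1, hm2, -⟩ | ⟨hm1, hm2⟩ | ⟨hm1, hm2⟩
      · exact caseB_exists hsh T' hstab hgen hS f₁ f₂ hf12 h1L h2L hr1 hr2 honly
          hm1 hm2 hnoloop hw0
      · -- `f₂` is a leg, marked by some `i.castSucc`
        obtain ⟨j, hj⟩ := T'.G.mark_surj f₂ hfl2 hm2
        obtain ⟨i, hi⟩ := (Fin.exists_castSucc_eq (i := j)).2 
          (fun h => h2L (by rw [← hj, h]; rfl))
        have hrm : T'.G.r (T'.G.mark i.castSucc) = baseV T' := by
          rw [hi, hj]; exact hr2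
        have honly' : ∀ x, T'.G.r x ≠ x → T'.G.r x = baseV T' →
            x = lastLeg T' ∨ x = f₁ ∨ x = T'.G.mark i.castSucc := by
          intro x hx1 hx2
          rcases honly x hx1 hx2 with h | h | h
          · exact Or.inl h
          · exact Or.inr (Or.inl h)
          · exact Or.inr (Or.inr (by rw [hi, hj]; exact h))
        exact caseC_exists T' hstab hgen hS f₁ i hm1 h1L hr1 hrm honly' hw0
      · -- `f₁` is a leg, marked by some `i.castSucc`
        obtain ⟨j, hj⟩ := T'.G.mark_surj f₁ hfl1 hm1
        obtain ⟨i, hi⟩ := (Fin.exists_castSucc_eq (i := j)).2 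
          (fun h => h1L (by rw [← hj, h]; rfl))
        have hrm : T'.G.r (T'.G.mark i.castSucc) = baseV T' := by
          rw [hi, hj]; exact hr1
        have honly' : ∀ x, T'.G.r x ≠ x → T'.G.r x = baseV T' →
            x = lastLeg T' ∨ x = f₂ ∨ x = T'.G.mark i.castSucc := by
          intro x hx1 hx2
          rcases honly x hx1 hx2 with h | h | h
          · exact Or.inl h
          · exact Or.inr (Or.inr (by rw [hi, hj]; exact h))
          · exact Or.inr (Or.inl h)
        exact caseC_exists T' hstab hgen hS f₂ i hm2 h2L hr2 hrm honly' hw0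
end

section
/- Tropical clutching is well defined: let P be a sharp, integral, saturated commutative monoid, let g = g_1 + g_2, let {1, …, n} = I_1 ⊔ I_2 be a partition, let Γ_1 be a stable tropical curve of genus g_1 over P whose legs are marked by I_1 ⊔ {⋆}, let Γ_2 be a stable tropical curve of genus g_2 over P whose legs are marked by I_2 ⊔ {•}, and let δ ∈ P ∖ {0}. Form the graph with underlying set X(𝔾(Γ_1)) ⊔ X(𝔾(Γ_2)), the root maps of Γ_1 and Γ_2, and the involution agreeing with those of Γ_1 and Γ_2 except that it exchanges the flag marked ⋆ and the flag marked •, so that {⋆, •} becomes an edge; give this new edge length δ, keep all other edge lengths, vertex weights and the markings by I_1 ⊔ I_2 = {1, …, n}. Then the result is a stable tropical curve of genus g_1 + g_2 with n marked legs over P. -/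
/-- The raw data `(Γ, len)` is the clutching of the tropical curves `T₁` (legs
marked by `I₁ ⊔ {⋆}`, with `⋆ = none`) and `T₂` (legs marked by `I₂ ⊔ {•}`, with
`• = none`) along `δ`: the underlying set is the disjoint union of the underlying
sets (via the injections `u₁, u₂`), the root maps and weights are those of `T₁` and
`T₂`, the involution agrees with those of `T₁, T₂` except that it exchanges the
flag marked `⋆` with the flag marked `•` (turning `{⋆, •}` into an edge of length
`δ`), all other edge lengths are kept, and the markings are given by the partition
`E : I₁ ⊕ I₂ ≃ Fin n`. -/
def IsClutch {P : Type} [AddCommMonoid P] {ι₁ ι₂ : Type} {n : ℕ}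
    (E : ι₁ ⊕ ι₂ ≃ Fin n) (T₁ : Trop P (Option ι₁)) (T₂ : Trop P (Option ι₂))
    (δ : P) (Γ : WGraph (Fin n)) (len : Γ.X → P) : Prop :=
  ∃ (u₁ : T₁.G.X → Γ.X) (u₂ : T₂.G.X → Γ.X),
    Function.Injective u₁ ∧ Function.Injective u₂ ∧
    (∀ x y, u₁ x ≠ u₂ y) ∧
    (∀ z : Γ.X, (∃ x, u₁ x = z) ∨ (∃ y, u₂ y = z)) ∧
    (∀ x, u₁ (T₁.G.r x) = Γ.r (u₁ x)) ∧
    (∀ y, u₂ (T₂.G.r y) = Γ.r (u₂ y)) ∧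
    (∀ x, x ≠ T₁.G.mark none → u₁ (T₁.G.ι x) = Γ.ι (u₁ x)) ∧
    (∀ y, y ≠ T₂.G.mark none → u₂ (T₂.G.ι y) = Γ.ι (u₂ y)) ∧
    Γ.ι (u₁ (T₁.G.mark none)) = u₂ (T₂.G.mark none) ∧
    (∀ x, T₁.G.r x = x → Γ.w (u₁ x) = T₁.G.w x) ∧
    (∀ y, T₂.G.r y = y → Γ.w (u₂ y) = T₂.G.w y) ∧
    (∀ a : ι₁, Γ.mark (E (Sum.inl a)) = u₁ (T₁.G.mark (some a))) ∧
    (∀ b : ι₂, Γ.mark (E (Sum.inr b)) = u₂ (T₂.G.mark (some b))) ∧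
    len (u₁ (T₁.G.mark none)) = δ ∧
    len (u₂ (T₂.G.mark none)) = δ ∧
    (∀ x, T₁.G.ι x ≠ x → len (u₁ x) = T₁.len x) ∧
    (∀ y, T₂.G.ι y ≠ y → len (u₂ y) = T₂.len y)

section Aux

lemma two_mul_card_aux {α : Type} [Fintype α] [DecidableEq α]
    (i : α → α) (hinv : ∀ x, i (i x) = x) :
    (Finset.univ.filter fun x => i x ≠ x).card
      = 2 * ((Finset.univ.filter fun x => i x ≠ x).image
          (fun x => ({x, i x} : Finset α))).card := by
  have key : ∀ b ∈ (Finset.univ.filter fun x => i x ≠ x).image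
      (fun x => ({x, i x} : Finset α)),
      ((Finset.univ.filter fun x => i x ≠ x).filter
        (fun a => ({a, i a} : Finset α) = b)).card = 2 := by
    intro b hb
    obtain ⟨x, hx, rfl⟩ := Finset.mem_image.mp hb
    have hxS : i x ≠ x := (Finset.mem_filter.mp hx).2
    have hset : ((Finset.univ.filter fun x => i x ≠ x).filter
        (fun a => ({a, i a} : Finset α) = {x, i x})) = {x, i x} := by
      ext a
      simp only [Finset.mem_filter, Finset.mem_univ, true_and, Finset.mem_insert,
        Finset.mem_singleton]
      constructor
      · rintro ⟨-, h⟩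
        have : a ∈ ({x, i x} : Finset α) := by rw [← h]; simp
        simpa using this
      · rintro (rfl | rfl)
        · exact ⟨hxS, rfl⟩
        · refine ⟨by rw [hinv]; exact fun h => hxS h.symm, ?_⟩
          rw [hinv, Finset.pair_comm]
    rw [hset, Finset.card_pair (fun h => hxS h.symm)]
  rw [Finset.card_eq_sum_card_image (fun x => ({x, i x} : Finset α)),
    Finset.sum_congr rfl key, Finset.sum_const, smul_eq_mul, mul_comm]

lemma WGraph.two_mul_numE {μ : Type} (G : WGraph μ) :
    (Finset.univ.filter fun x : G.X => G.ι x ≠ x).card = 2 * G.numE := by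
  simp only [WGraph.numE, WGraph.edgeSet, WGraph.subEdgeSet]
  exact two_mul_card_aux G.ι G.ι_invol

/-- The clutched graph: disjoint union with the `⋆` and `•` legs glued into an edge. -/
def clutchGraph {P : Type} [AddCommMonoid P] {ι₁ ι₂ : Type} {n : ℕ}
    (E : ι₁ ⊕ ι₂ ≃ Fin n) (T₁ : Trop P (Option ι₁)) (T₂ : Trop P (Option ι₂)) :
    WGraph (Fin n) where
  X := T₁.G.X ⊕ T₂.G.X
  fin := inferInstance
  deq := inferInstance
  r := Sum.map T₁.G.r T₂.G.r
  ι := Sum.elim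
    (fun x => if x = T₁.G.mark none then .inr (T₂.G.mark none) else .inl (T₁.G.ι x))
    (fun y => if y = T₂.G.mark none then .inl (T₁.G.mark none) else .inr (T₂.G.ι y))
  w := Sum.elim T₁.G.w T₂.G.w
  mark := fun j => Sum.elim (fun a => .inl (T₁.G.mark (some a)))
    (fun b => .inr (T₂.G.mark (some b))) (E.symm j)
  r_idem := by rintro (x | y) <;> simp [T₁.G.r_idem, T₂.G.r_idem]
  ι_invol := by
    rintro (x | y)
    · by_cases hx : x = T₁.G.mark none
      · subst hx; simp
      · have h2 : T₁.G.ι x ≠ T₁.G.mark none := fun h =>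
          hx (by rw [← T₁.G.ι_invol x, h, T₁.G.mark_leg])
        simp [hx, h2, T₁.G.ι_invol]
    · by_cases hy : y = T₂.G.mark none
      · subst hy; simp
      · have h2 : T₂.G.ι y ≠ T₂.G.mark none := fun h =>
          hy (by rw [← T₂.G.ι_invol y, h, T₂.G.mark_leg])
        simp [hy, h2, T₂.G.ι_invol]
  ι_fix := by
    rintro (x | y) h
    · have hr : T₁.G.r x = x := by simpa using h
      have hx : x ≠ T₁.G.mark none := fun h' => T₁.G.mark_flag none (by rw [← h']; exact hr)
      simp [hx, T₁.G.ι_fix x hr]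
    · have hr : T₂.G.r y = y := by simpa using h
      have hy : y ≠ T₂.G.mark none := fun h' => T₂.G.mark_flag none (by rw [← h']; exact hr)
      simp [hy, T₂.G.ι_fix y hr]
  mark_flag := by
    intro j
    show Sum.map T₁.G.r T₂.G.r (Sum.elim _ _ (E.symm j)) ≠ Sum.elim _ _ (E.symm j)
    rcases E.symm j with a | b <;> simp
    · exact T₁.G.mark_flag (some a)
    · exact T₂.G.mark_flag (some b)
  mark_leg := by
    intro j
    show Sum.elim _ _ (Sum.elim _ _ (E.symm j)) = Sum.elim _ _ (E.symm j)
    rcases E.symm j with a | b <;> simp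
    · have h1 : T₁.G.mark (some a) ≠ T₁.G.mark none := fun h =>
        Option.some_ne_none _ (T₁.G.mark_inj h)
      simp [h1, T₁.G.mark_leg]
    · have h1 : T₂.G.mark (some b) ≠ T₂.G.mark none := fun h =>
        Option.some_ne_none _ (T₂.G.mark_inj h)
      simp [h1, T₂.G.mark_leg]
  mark_inj := by
    intro j j' h
    simp only at h
    rcases hE : E.symm j with a | b <;> rcases hE' : E.symm j' with a' | b' <;>
      rw [hE, hE'] at h <;> simp only [Sum.elim_inl, Sum.elim_inr] at h
    · have ha : a = a' := by
        have h2 := T₁.G.mark_inj (Sum.inl.inj h); injection h2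
      apply E.symm.injective; rw [hE, hE', ha]
    · exact absurd h (by simp)
    · exact absurd h (by simp)
    · have hb : b = b' := by
        have h2 := T₂.G.mark_inj (Sum.inr.inj h); injection h2
      apply E.symm.injective; rw [hE, hE', hb]
  mark_surj := by
    rintro (x | y) hr hι
    · have hr' : T₁.G.r x ≠ x := by intro h; apply hr; simp [h]
      by_cases hx : x = T₁.G.mark none
      · simp [hx] at hι
      · simp only [Sum.elim_inl, if_neg hx] at hι
        have hℓ : T₁.G.ι x = x := by injection hι
        obtain ⟨j, hj⟩ := T₁.G.mark_surj x hr' hℓ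
        rcases j with - | a
        · exact absurd hj.symm hx
        · refine ⟨E (Sum.inl a), ?_⟩
          simp only [Equiv.symm_apply_apply, Sum.elim_inl, hj]
    · have hr' : T₂.G.r y ≠ y := by intro h; apply hr; simp [h]
      by_cases hy : y = T₂.G.mark none
      · simp [hy] at hι
      · simp only [Sum.elim_inr, if_neg hy] at hι
        have hℓ : T₂.G.ι y = y := by injection hι
        obtain ⟨j, hj⟩ := T₂.G.mark_surj y hr' hℓ
        rcases j with - | b
        · exact absurd hj.symm hy
        · refine ⟨E (Sum.inr b), ?_⟩
          simp only [Equiv.symm_apply_apply, Sum.elim_inr, hj]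


/-- The length function on the clutched graph. -/
def clutchLen {P : Type} [AddCommMonoid P] {ι₁ ι₂ : Type} {n : ℕ}
    (E : ι₁ ⊕ ι₂ ≃ Fin n) (T₁ : Trop P (Option ι₁)) (T₂ : Trop P (Option ι₂)) (δ : P) :
    (clutchGraph E T₁ T₂).X → P :=
  Sum.elim (fun x => if x = T₁.G.mark none then δ else T₁.len x)
    (fun y => if y = T₂.G.mark none then δ else T₂.len y)

lemma clutch_isClutch {P : Type} [AddCommMonoid P] {ι₁ ι₂ : Type} {n : ℕ}
    (E : ι₁ ⊕ ι₂ ≃ Fin n) (T₁ : Trop P (Option ι₁)) (T₂ : Trop P (Option ι₂)) (δ : P) :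
    IsClutch E T₁ T₂ δ (clutchGraph E T₁ T₂) (clutchLen E T₁ T₂ δ) := by
  refine ⟨Sum.inl, Sum.inr, Sum.inl_injective, Sum.inr_injective,
    fun x y => Sum.inl_ne_inr, ?_, fun x => rfl, fun y => rfl, ?_, ?_, ?_,
    fun x _ => rfl, fun y _ => rfl, ?_, ?_, ?_, ?_, ?_, ?_⟩
  · rintro (x | y)
    · exact Or.inl ⟨x, rfl⟩
    · exact Or.inr ⟨y, rfl⟩
  · intro x hx
    show Sum.inl (T₁.G.ι x)
      = (if x = T₁.G.mark none then Sum.inr (T₂.G.mark none) else Sum.inl (T₁.G.ι x))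
    rw [if_neg hx]
  · intro y hy
    show Sum.inr (T₂.G.ι y)
      = (if y = T₂.G.mark none then Sum.inl (T₁.G.mark none) else Sum.inr (T₂.G.ι y))
    rw [if_neg hy]
  · show (if T₁.G.mark none = T₁.G.mark none then Sum.inr (T₂.G.mark none)
      else Sum.inl (T₁.G.ι (T₁.G.mark none))) = Sum.inr (T₂.G.mark none)
    rw [if_pos rfl]
  · intro a
    show Sum.elim _ _ (E.symm (E (Sum.inl a))) = Sum.inl (T₁.G.mark (some a))
    rw [Equiv.symm_apply_apply]
    rfl
  · intro b
    show Sum.elim _ _ (E.symm (E (Sum.inr b))) = Sum.inr (T₂.G.mark (some b))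
    rw [Equiv.symm_apply_apply]
    rfl
  · show (if T₁.G.mark none = T₁.G.mark none then δ else _) = δ
    rw [if_pos rfl]
  · show (if T₂.G.mark none = T₂.G.mark none then δ else _) = δ
    rw [if_pos rfl]
  · intro x hx
    show (if x = T₁.G.mark none then δ else T₁.len x) = T₁.len x
    rw [if_neg (fun h => hx (by rw [h, T₁.G.mark_leg]))]
  · intro y hy
    show (if y = T₂.G.mark none then δ else T₂.len y) = T₂.len y
    rw [if_neg (fun h => hy (by rw [h, T₂.G.mark_leg]))]

lemma isClutch_spec {P : Type} [AddCommMonoid P] {ι₁ ι₂ : Type} {n : ℕ}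
    (E : ι₁ ⊕ ι₂ ≃ Fin n) (T₁ : Trop P (Option ι₁)) (T₂ : Trop P (Option ι₂))
    (h₁s : T₁.G.Stable) (h₂s : T₂.G.Stable) (δ : P) (hδ : δ ≠ 0)
    (Γ : WGraph (Fin n)) (len : Γ.X → P) (hcl : IsClutch E T₁ T₂ δ Γ len) :
    Γ.Connected ∧ Γ.genus = T₁.G.genus + T₂.G.genus ∧ Γ.Stable ∧
      (∀ x, len (Γ.ι x) = len x) ∧ (∀ x, Γ.ι x ≠ x → len x ≠ 0) := by
  classical
  obtain ⟨u₁, u₂, h₁i, h₂i, hdis, hsurj, hr₁, hr₂, hι₁, hι₂, hglue, hw₁, hw₂,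
    hmk₁, hmk₂, hlδ₁, hlδ₂, hl₁, hl₂⟩ := hcl
  set m₁ := T₁.G.mark none with hm₁def
  set m₂ := T₂.G.mark none with hm₂def
  have hglue' : Γ.ι (u₂ m₂) = u₁ m₁ := by rw [← hglue, Γ.ι_invol]
  have hm₁leg : T₁.G.ι m₁ = m₁ := T₁.G.mark_leg none
  have hm₂leg : T₂.G.ι m₂ = m₂ := T₂.G.mark_leg none
  have hm₁flag : T₁.G.r m₁ ≠ m₁ := T₁.G.mark_flag none
  have hm₂flag : T₂.G.r m₂ ≠ m₂ := T₂.G.mark_flag none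
  have hv₁ : ∀ x, Γ.r (u₁ x) = u₁ x ↔ T₁.G.r x = x := fun x =>
    ⟨fun h => h₁i ((hr₁ x).trans h), fun h => (hr₁ x).symm.trans (congrArg u₁ h)⟩
  have hv₂ : ∀ y, Γ.r (u₂ y) = u₂ y ↔ T₂.G.r y = y := fun y =>
    ⟨fun h => h₂i ((hr₂ y).trans h), fun h => (hr₂ y).symm.trans (congrArg u₂ h)⟩
  -- transported chains
  have trans₁ : ∀ v u : T₁.G.X, Relation.ReflTransGen (T₁.G.subAdj Finset.univ) v u →
      Relation.ReflTransGen (Γ.subAdj Finset.univ) (u₁ v) (u₁ u) := by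
    intro v u h
    induction h with
    | refl => exact Relation.ReflTransGen.refl
    | tail h' step ih =>
      obtain ⟨f, -, hf1, hf2, hf3⟩ := step
      by_cases hfm : f = m₁
      · subst hfm
        rw [hm₁leg, hf2] at hf3
        exact hf3 ▸ ih
      · refine ih.tail ⟨u₁ f, Finset.mem_univ _, ?_, ?_, ?_⟩
        · intro h; exact hf1 (h₁i ((hr₁ f).trans h))
        · rw [← hr₁, hf2]
        · rw [← hι₁ f hfm, ← hr₁, hf3]
  have trans₂ : ∀ v u : T₂.G.X, Relation.ReflTransGen (T₂.G.subAdj Finset.univ) v u →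
      Relation.ReflTransGen (Γ.subAdj Finset.univ) (u₂ v) (u₂ u) := by
    intro v u h
    induction h with
    | refl => exact Relation.ReflTransGen.refl
    | tail h' step ih =>
      obtain ⟨f, -, hf1, hf2, hf3⟩ := step
      by_cases hfm : f = m₂
      · subst hfm
        rw [hm₂leg, hf2] at hf3
        exact hf3 ▸ ih
      · refine ih.tail ⟨u₂ f, Finset.mem_univ _, ?_, ?_, ?_⟩
        · intro h; exact hf1 (h₂i ((hr₂ f).trans h))
        · rw [← hr₂, hf2]
        · rw [← hι₂ f hfm, ← hr₂, hf3]
  have hbr : Γ.subAdj Finset.univ (u₁ (T₁.G.r m₁)) (u₂ (T₂.G.r m₂)) := by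
    refine ⟨u₁ m₁, Finset.mem_univ _, ?_, (hr₁ m₁).symm, ?_⟩
    · intro h; exact hm₁flag (h₁i ((hr₁ m₁).trans h))
    · rw [hglue, ← hr₂]
  have hbr' : Γ.subAdj Finset.univ (u₂ (T₂.G.r m₂)) (u₁ (T₁.G.r m₁)) := by
    refine ⟨u₂ m₂, Finset.mem_univ _, ?_, (hr₂ m₂).symm, ?_⟩
    · intro h; exact hm₂flag (h₂i ((hr₂ m₂).trans h))
    · rw [hglue', ← hr₁]
  have hv1conn : ∀ x x', T₁.G.r x = x → T₁.G.r x' = x' →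
      Relation.ReflTransGen (Γ.subAdj Finset.univ) (u₁ x) (u₁ x') := fun x x' hx hx' =>
    trans₁ x x' (T₁.conn.2 x (Finset.mem_univ x) x' (Finset.mem_univ x') hx hx')
  have hv2conn : ∀ y y', T₂.G.r y = y → T₂.G.r y' = y' →
      Relation.ReflTransGen (Γ.subAdj Finset.univ) (u₂ y) (u₂ y') := fun y y' hy hy' =>
    trans₂ y y' (T₂.conn.2 y (Finset.mem_univ y) y' (Finset.mem_univ y') hy hy')
  have hconn : Γ.Connected := by
    refine ⟨⟨u₁ (T₁.G.r m₁), Finset.mem_univ _, (hv₁ _).2 (T₁.G.r_idem m₁)⟩, ?_⟩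
    intro v hv u hu hvv huu
    rcases hsurj v with ⟨x, rfl⟩ | ⟨y, rfl⟩ <;> rcases hsurj u with ⟨x', rfl⟩ | ⟨y', rfl⟩
    · exact hv1conn x x' ((hv₁ x).1 hvv) ((hv₁ x').1 huu)
    · exact ((hv1conn x (T₁.G.r m₁) ((hv₁ x).1 hvv) (T₁.G.r_idem m₁)).tail hbr).trans
        (hv2conn (T₂.G.r m₂) y' (T₂.G.r_idem m₂) ((hv₂ y').1 huu))
    · exact ((hv2conn y (T₂.G.r m₂) ((hv₂ y).1 hvv) (T₂.G.r_idem m₂)).tail hbr').trans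
        (hv1conn (T₁.G.r m₁) x' (T₁.G.r_idem m₁) ((hv₁ x').1 huu))
    · exact hv2conn y y' ((hv₂ y).1 hvv) ((hv₂ y').1 huu)
  -- vertex sets
  have hVset : (Finset.univ.filter fun z : Γ.X => Γ.r z = z)
      = (Finset.univ.filter fun x : T₁.G.X => T₁.G.r x = x).image u₁
        ∪ (Finset.univ.filter fun y : T₂.G.X => T₂.G.r y = y).image u₂ := by
    ext z
    simp only [Finset.mem_filter, Finset.mem_univ, true_and, Finset.mem_union,
      Finset.mem_image]
    constructor
    · intro hz
      rcases hsurj z with ⟨x, rfl⟩ | ⟨y, rfl⟩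
      · exact Or.inl ⟨x, (hv₁ x).1 hz, rfl⟩
      · exact Or.inr ⟨y, (hv₂ y).1 hz, rfl⟩
    · rintro (⟨x, hx, rfl⟩ | ⟨y, hy, rfl⟩)
      · exact (hv₁ x).2 hx
      · exact (hv₂ y).2 hy
  have hdisV : Disjoint ((Finset.univ.filter fun x : T₁.G.X => T₁.G.r x = x).image u₁)
      ((Finset.univ.filter fun y : T₂.G.X => T₂.G.r y = y).image u₂) := by
    rw [Finset.disjoint_left]
    rintro z hz1 hz2
    obtain ⟨x, -, rfl⟩ := Finset.mem_image.mp hz1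
    obtain ⟨y, -, h⟩ := Finset.mem_image.mp hz2
    exact hdis x y h.symm
  have hVcard : (Finset.univ.filter fun z : Γ.X => Γ.r z = z).card
      = (Finset.univ.filter fun x : T₁.G.X => T₁.G.r x = x).card
        + (Finset.univ.filter fun y : T₂.G.X => T₂.G.r y = y).card := by
    rw [hVset, Finset.card_union_of_disjoint hdisV,
      Finset.card_image_of_injective _ h₁i, Finset.card_image_of_injective _ h₂i]
  -- moved flags
  have hMset : (Finset.univ.filter fun z : Γ.X => Γ.ι z ≠ z)
      = ((Finset.univ.filter fun x : T₁.G.X => T₁.G.ι x ≠ x) ∪ {m₁}).image u₁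
        ∪ ((Finset.univ.filter fun y : T₂.G.X => T₂.G.ι y ≠ y) ∪ {m₂}).image u₂ := by
    ext z
    simp only [Finset.mem_filter, Finset.mem_univ, true_and, Finset.mem_union,
      Finset.mem_image, Finset.mem_singleton]
    constructor
    · intro hz
      rcases hsurj z with ⟨x, rfl⟩ | ⟨y, rfl⟩
      · by_cases hx : x = m₁
        · exact Or.inl ⟨x, Or.inr hx, rfl⟩
        · refine Or.inl ⟨x, Or.inl ?_, rfl⟩
          intro hιx
          exact hz (by rw [← hι₁ x hx, hιx])
      · by_cases hy : y = m₂
        · exact Or.inr ⟨y, Or.inr hy, rfl⟩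
        · refine Or.inr ⟨y, Or.inl ?_, rfl⟩
          intro hιy
          exact hz (by rw [← hι₂ y hy, hιy])
    · rintro (⟨x, hx | rfl, rfl⟩ | ⟨y, hy | rfl, rfl⟩)
      · rw [← hι₁ x (fun h => hx (by rw [h, hm₁leg]))]
        exact fun h => hx (h₁i h)
      · rw [hglue]
        exact fun h => hdis m₁ m₂ h.symm
      · rw [← hι₂ y (fun h => hy (by rw [h, hm₂leg]))]
        exact fun h => hy (h₂i h)
      · rw [hglue']
        exact hdis m₁ m₂
  have hd1 : Disjoint (Finset.univ.filter fun x : T₁.G.X => T₁.G.ι x ≠ x) ({m₁} : Finset T₁.G.X) := by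
    simp [Finset.disjoint_singleton_right, hm₁leg]
  have hd2 : Disjoint (Finset.univ.filter fun y : T₂.G.X => T₂.G.ι y ≠ y) ({m₂} : Finset T₂.G.X) := by
    simp [Finset.disjoint_singleton_right, hm₂leg]
  have hd12 : Disjoint (((Finset.univ.filter fun x : T₁.G.X => T₁.G.ι x ≠ x) ∪ {m₁}).image u₁)
      (((Finset.univ.filter fun y : T₂.G.X => T₂.G.ι y ≠ y) ∪ {m₂}).image u₂) := by
    rw [Finset.disjoint_left]
    rintro z hz1 hz2
    obtain ⟨x, -, rfl⟩ := Finset.mem_image.mp hz1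
    obtain ⟨y, -, h⟩ := Finset.mem_image.mp hz2
    exact hdis x y h.symm
  have hMcard : (Finset.univ.filter fun z : Γ.X => Γ.ι z ≠ z).card
      = ((Finset.univ.filter fun x : T₁.G.X => T₁.G.ι x ≠ x).card + 1)
        + ((Finset.univ.filter fun y : T₂.G.X => T₂.G.ι y ≠ y).card + 1) := by
    rw [hMset, Finset.card_union_of_disjoint hd12,
      Finset.card_image_of_injective _ h₁i, Finset.card_image_of_injective _ h₂i,
      Finset.card_union_of_disjoint hd1, Finset.card_union_of_disjoint hd2,
      Finset.card_singleton, Finset.card_singleton]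
  have hE₁ := T₁.G.two_mul_numE
  have hE₂ := T₂.G.two_mul_numE
  have hEΓ := Γ.two_mul_numE
  have hEcard : Γ.numE = T₁.G.numE + T₂.G.numE + 1 := by omega
  -- weights
  have hWsum : (∑ v ∈ Finset.univ.filter (fun z : Γ.X => Γ.r z = z), (Γ.w v : ℤ))
      = (∑ x ∈ Finset.univ.filter (fun x : T₁.G.X => T₁.G.r x = x), (T₁.G.w x : ℤ))
        + ∑ y ∈ Finset.univ.filter (fun y : T₂.G.X => T₂.G.r y = y), (T₂.G.w y : ℤ) := by
    rw [hVset, Finset.sum_union hdisV, Finset.sum_image (fun x _ y _ h => h₁i h),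
      Finset.sum_image (fun x _ y _ h => h₂i h)]
    congr 1
    · exact Finset.sum_congr rfl fun x hx => by
        rw [hw₁ x (Finset.mem_filter.mp hx).2]
    · exact Finset.sum_congr rfl fun y hy => by
        rw [hw₂ y (Finset.mem_filter.mp hy).2]
  have hgen : Γ.genus = T₁.G.genus + T₂.G.genus := by
    have e1 : (Γ.subEdgeSet Finset.univ).card = Γ.numE := rfl
    have e2 : (T₁.G.subEdgeSet Finset.univ).card = T₁.G.numE := rfl
    have e3 : (T₂.G.subEdgeSet Finset.univ).card = T₂.G.numE := rfl
    simp only [WGraph.genus, WGraph.subGenus, WGraph.subB1, e1, e2, e3, hEcard,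
      hVcard, hWsum]
    push_cast
    ring
  -- valences
  have hval₁ : ∀ x, T₁.G.r x = x → Γ.val (u₁ x) = T₁.G.val x := by
    intro x hx
    have hset : (Finset.univ.filter fun z : Γ.X => Γ.r z ≠ z ∧ Γ.r z = u₁ x)
        = (Finset.univ.filter fun f : T₁.G.X => T₁.G.r f ≠ f ∧ T₁.G.r f = x).image u₁ := by
      ext z
      simp only [Finset.mem_filter, Finset.mem_univ, true_and, Finset.mem_image]
      constructor
      · rintro ⟨hz1, hz2⟩
        rcases hsurj z with ⟨x', rfl⟩ | ⟨y', rfl⟩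
        · exact ⟨x', ⟨fun h => hz1 ((hv₁ x').2 h), h₁i ((hr₁ x').trans hz2)⟩, rfl⟩
        · exact absurd ((hr₂ y').trans hz2).symm (hdis x (T₂.G.r y'))
      · rintro ⟨f, ⟨hf1, hf2⟩, rfl⟩
        refine ⟨fun h => hf1 (h₁i ((hr₁ f).trans h)), ?_⟩
        rw [← hr₁, hf2]
    simp only [WGraph.val, hset, Finset.card_image_of_injective _ h₁i]
  have hval₂ : ∀ y, T₂.G.r y = y → Γ.val (u₂ y) = T₂.G.val y := by
    intro y hy
    have hset : (Finset.univ.filter fun z : Γ.X => Γ.r z ≠ z ∧ Γ.r z = u₂ y)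
        = (Finset.univ.filter fun f : T₂.G.X => T₂.G.r f ≠ f ∧ T₂.G.r f = y).image u₂ := by
      ext z
      simp only [Finset.mem_filter, Finset.mem_univ, true_and, Finset.mem_image]
      constructor
      · rintro ⟨hz1, hz2⟩
        rcases hsurj z with ⟨x', rfl⟩ | ⟨y', rfl⟩
        · exact absurd ((hr₁ x').trans hz2) (hdis (T₁.G.r x') y)
        · exact ⟨y', ⟨fun h => hz1 ((hv₂ y').2 h), h₂i ((hr₂ y').trans hz2)⟩, rfl⟩
      · rintro ⟨f, ⟨hf1, hf2⟩, rfl⟩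
        refine ⟨fun h => hf1 (h₂i ((hr₂ f).trans h)), ?_⟩
        rw [← hr₂, hf2]
    simp only [WGraph.val, hset, Finset.card_image_of_injective _ h₂i]
  have hstab : Γ.Stable := by
    intro z hz
    rcases hsurj z with ⟨x, rfl⟩ | ⟨y, rfl⟩
    · have hx := (hv₁ x).1 hz
      rw [hw₁ x hx, hval₁ x hx]
      exact h₁s x hx
    · have hy := (hv₂ y).1 hz
      rw [hw₂ y hy, hval₂ y hy]
      exact h₂s y hy
  have hlsymm : ∀ z, len (Γ.ι z) = len z := by
    intro z
    rcases hsurj z with ⟨x, rfl⟩ | ⟨y, rfl⟩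
    · by_cases hx : x = m₁
      · subst hx; rw [hglue, hlδ₂, hlδ₁]
      · rw [← hι₁ x hx]
        by_cases hιx : T₁.G.ι x = x
        · rw [hιx]
        · have h2 : T₁.G.ι (T₁.G.ι x) ≠ T₁.G.ι x := by
            rw [T₁.G.ι_invol]; exact fun h => hιx h.symm
          rw [hl₁ _ h2, hl₁ _ hιx, T₁.len_symm]
    · by_cases hy : y = m₂
      · subst hy; rw [hglue', hlδ₁, hlδ₂]
      · rw [← hι₂ y hy]
        by_cases hιy : T₂.G.ι y = y
        · rw [hιy]
        · have h2 : T₂.G.ι (T₂.G.ι y) ≠ T₂.G.ι y := by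
            rw [T₂.G.ι_invol]; exact fun h => hιy h.symm
          rw [hl₂ _ h2, hl₂ _ hιy, T₂.len_symm]
  have hlne : ∀ z, Γ.ι z ≠ z → len z ≠ 0 := by
    intro z hz
    rcases hsurj z with ⟨x, rfl⟩ | ⟨y, rfl⟩
    · by_cases hx : x = m₁
      · subst hx; rw [hlδ₁]; exact hδ
      · have hιx : T₁.G.ι x ≠ x := fun h => hz (by rw [← hι₁ x hx, h])
        rw [hl₁ x hιx]; exact T₁.len_ne x hιx
    · by_cases hy : y = m₂
      · subst hy; rw [hlδ₂]; exact hδ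
      · have hιy : T₂.G.ι y ≠ y := fun h => hz (by rw [← hι₂ y hy, h])
        rw [hl₂ y hιy]; exact T₂.len_ne y hιy
  exact ⟨hconn, hgen, hstab, hlsymm, hlne⟩

end Aux
/-- Tropical clutching is well defined: given a partition
`{1,…,n} = I₁ ⊔ I₂` with `2gᵢ - 2 + #Iᵢ ≥ 0`, stable tropical curves `Γ₁, Γ₂` over a
sharp, integral, saturated monoid `P` of genera `g₁, g₂`, marked by `I₁ ⊔ {⋆}` and
`I₂ ⊔ {•}`, and `δ ∈ P \ {0}`, the graph obtained by gluing the legs `⋆` and `•`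
into an edge of length `δ` can be formed, and any realization of it is a stable
tropical curve of genus `g₁ + g₂` with `n` marked legs over `P` (connected, of the
right genus, stable, with involution-invariant edge lengths which are nonzero on
every edge). -/
theorem tropical_clutching_well_defined {P : Type} [AddCommMonoid P]
    (hsh : Sharp P) (hint : IntegralMonoid P) (hsat : SaturatedMonoid P)
    {ι₁ ι₂ : Type} [Fintype ι₁] [Fintype ι₂] {n : ℕ} (E : ι₁ ⊕ ι₂ ≃ Fin n)
    {g₁ g₂ : ℤ}
    (hI₁ : 0 ≤ 2 * g₁ - 2 + (Fintype.card ι₁ : ℤ))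
    (hI₂ : 0 ≤ 2 * g₂ - 2 + (Fintype.card ι₂ : ℤ))
    (T₁ : Trop P (Option ι₁)) (h₁s : T₁.G.Stable) (h₁g : T₁.G.genus = g₁)
    (T₂ : Trop P (Option ι₂)) (h₂s : T₂.G.Stable) (h₂g : T₂.G.genus = g₂)
    (δ : P) (hδ : δ ≠ 0) :
    (∃ (Γ : WGraph (Fin n)) (len : Γ.X → P), IsClutch E T₁ T₂ δ Γ len) ∧
      ∀ (Γ : WGraph (Fin n)) (len : Γ.X → P), IsClutch E T₁ T₂ δ Γ len →
        Γ.Connected ∧ Γ.genus = g₁ + g₂ ∧ Γ.Stable ∧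
        (∀ x, len (Γ.ι x) = len x) ∧ (∀ x, Γ.ι x ≠ x → len x ≠ 0) := by
  refine ⟨⟨clutchGraph E T₁ T₂, clutchLen E T₁ T₂ δ, clutch_isClutch E T₁ T₂ δ⟩, ?_⟩
  intro Γ len hcl
  obtain ⟨hc, hg, hs, h4, h5⟩ := isClutch_spec E T₁ T₂ h₁s h₂s δ hδ Γ len hcl
  exact ⟨hc, by rw [hg, h₁g, h₂g], hs, h4, h5⟩
end
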